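/- arXiv:1008.2440 — 10 statements merged into one kernel-verified Lean document; each statement's English description precedes it below -/
import Mathlib

section
/- Let L be a closed language (i.e., L = L*), and define L^{-*} to be the intersection of all languages S such that S* = L. Then (L^{-*})* = L. -/
open scoped Computability

/-- Inverse star of a closed language: intersection of all `S` with `S∗ = L`. -/
def invStar {α : Type} (L : Language α) : Language α := ⋂₀ {S : Language α | S∗ = L}

/-- If `L` is closed (`L = L∗`), then `(L⁻*)∗ = L`. -/
theorem kstar_invStar_eq {α : Type} (L : Language α) (hL : L = L∗) :
    (invStar L)∗ = L := by
  have hsub : invStar L ≤ L := Set.sInter_subset_of_mem (show L∗ = L from hL.symm)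
  apply le_antisymm
  · calc (invStar L)∗ ≤ L∗ := kstar_mono hsub
      _ = L := hL.symm
  · have main : ∀ n (w : List α), w.length ≤ n → w ∈ L → w ∈ (invStar L)∗ := by
      intro n
      induction n with
      | zero =>
        intro w hw _
        have : w = [] := List.length_eq_zero_iff.mp (Nat.le_zero.mp hw)
        subst this
        exact Language.nil_mem_kstar _
      | succ n ih =>
        intro w hw hwL
        by_cases hmem : w ∈ invStar L
        · exact (le_kstar : invStar L ≤ (invStar L)∗) hmem
        · obtain ⟨S, hS, hwS⟩ : ∃ S : Language α, S∗ = L ∧ w ∉ S := by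
            by_contra h
            push_neg at h
            exact hmem fun S hS => h S hS
          have hwSstar : w ∈ S∗ := hS ▸ hwL
          rw [Language.mem_kstar_iff_exists_nonempty] at hwSstar
          obtain ⟨Ls, hjoin, hall⟩ := hwSstar
          subst hjoin
          match Ls, hall, hwS with
          | [], _, _ => exact Language.nil_mem_kstar _
          | [u], hall, hwS =>
            exact absurd (by simpa using (hall u (by simp)).1) hwS
          | u :: v :: rest, hall, hwS =>
            have hSL : S ≤ L := by rw [← hS]; exact le_kstar
            have key : ∀ y ∈ u :: v :: rest, y ∈ (invStar L)∗ := by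
              intro y hy
              have hyS := hall y hy
              have hylen : y.length < (u :: v :: rest).flatten.length := by
                have hne : ∀ z ∈ u :: v :: rest, 0 < z.length := fun z hz =>
                  List.length_pos_iff.mpr (hall z hz).2
                rcases List.mem_cons.mp hy with rfl | hy'
                · simp only [List.flatten_cons, List.length_append]
                  have := hne v (by simp)
                  omega
                · have hy2 : y.length ≤ (v :: rest).flatten.length := by
                    rcases List.mem_cons.mp hy' with rfl | hy''
                    · simp [List.length_append]
                    · have : y.length ≤ rest.flatten.length := by
                        rw [List.length_flatten]
                        exact List.le_sum_of_mem (List.mem_map_of_mem hy'')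
                      simp only [List.flatten_cons, List.length_append]
                      omega
                  have := hne u (by simp)
                  simp only [List.flatten_cons, List.length_append] at *
                  omega
              exact ih y (by omega) (hSL hyS.1)
            have : (u :: v :: rest).flatten ∈ ((invStar L)∗)∗ :=
              Language.join_mem_kstar key
            rwa [kstar_idem] at this
    intro w hwL
    exact main w.length w le_rfl hwL
end

section
/- Let L be a closed language (i.e., L = L*) over an alphabet Σ, and let L⁺ denote L with the empty word removed. Then L^{-*} = L⁺ \ (L⁺ · L⁺), i.e., the inverse star of L consists exactly of the nonempty words of L that cannot be written as a concatenation of two nonempty words of L. -/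
open scoped Computability

/-- The nonempty words of `L`. -/
def plus {α : Type} (L : Language α) : Language α := {w ∈ L | w ≠ []}

lemma plus_subset {α : Type} (L : Language α) : plus L ≤ L := fun _ h => h.1

lemma star_plus_diff {α : Type} (L : Language α) (hL : L = L∗) :
    (plus L \ (plus L * plus L))∗ = L := by
  apply le_antisymm
  · calc (plus L \ (plus L * plus L))∗ ≤ L∗ :=
          kstar_mono (fun w hw => (hw.1 : w ∈ plus L).1)
      _ = L := hL.symm
  · intro w hw
    have key : ∀ n : ℕ, ∀ v : List α, v.length ≤ n → v ∈ L →
        v ∈ (plus L \ (plus L * plus L))∗ := by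
      intro n
      induction n with
      | zero =>
        intro v hv _
        have : v = [] := List.eq_nil_of_length_eq_zero (Nat.le_zero.mp hv)
        subst this
        exact Language.nil_mem_kstar _
      | succ n ih =>
        intro v hv hvL
        rcases eq_or_ne v [] with rfl | hne
        · exact Language.nil_mem_kstar _
        by_cases hsplit : v ∈ plus L * plus L
        · rcases Language.mem_mul.mp hsplit with ⟨a, ha, b, hb, rfl⟩
          have hane : a ≠ [] := ha.2
          have hbne : b ≠ [] := hb.2
          have hal : a.length ≤ n := by
            have := List.length_append (as := a) (bs := b) ▸ hv
            have hb1 : 1 ≤ b.length := List.length_pos_iff.mpr hbne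
            omega
          have hbl : b.length ≤ n := by
            have := List.length_append (as := a) (bs := b) ▸ hv
            have ha1 : 1 ≤ a.length := List.length_pos_iff.mpr hane
            omega
          have h1 := ih a hal ha.1
          have h2 := ih b hbl hb.1
          have : a ++ b ∈ (plus L \ (plus L * plus L))∗ * (plus L \ (plus L * plus L))∗ :=
            Language.append_mem_mul h1 h2
          rwa [kstar_mul_kstar] at this
        · have : v ∈ plus L \ (plus L * plus L) := ⟨⟨hvL, hne⟩, hsplit⟩
          have := Language.join_mem_kstar (l := plus L \ (plus L * plus L))
            (L := [v]) (by simpa using this)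
          simpa using this
    exact key w.length w le_rfl hw

/-- If `L` is closed, then `L⁻* = L⁺ \ (L⁺ · L⁺)`. -/
theorem invStar_eq_plus_diff {α : Type} (L : Language α) (hL : L = L∗) :
    invStar L = plus L \ (plus L * plus L) := by
  apply le_antisymm
  · intro w hw
    exact hw (plus L \ (plus L * plus L)) (star_plus_diff L hL)
  · intro w hw
    intro S hS
    have hS' : @KStar.kstar (Language α) _ S = L := hS
    have hwL : w ∈ @KStar.kstar (Language α) _ S := by rw [hS']; exact hw.1.1
    rcases Language.mem_kstar.mp hwL with ⟨l, rfl, hl⟩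
    set l' := l.filter (fun y => !y.isEmpty) with hl'
    have hjoin : l'.flatten = l.flatten := by
      simp [hl', List.flatten_filter_not_isEmpty]
    have hmem' : ∀ y ∈ l', y ∈ S ∧ y ≠ [] := by
      intro y hy
      rw [hl', List.mem_filter] at hy
      refine ⟨hl y hy.1, ?_⟩
      simpa [List.isEmpty_iff] using hy.2
    have hSL : S ≤ L := by
      intro x hx
      rw [← hS']
      exact Language.mem_kstar.mpr ⟨[x], by simp, fun y hy => by rw [List.mem_singleton] at hy; subst hy; exact hx⟩
    match hml : l' with
    | [] =>
      exfalso
      exact hw.1.2 (by simpa using hjoin.symm)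
    | [a] =>
      have : l.flatten = a := by simpa using hjoin.symm
      rw [this]
      exact (hmem' a (hml ▸ List.mem_singleton_self a)).1
    | a :: b :: rest =>
      exfalso
      apply hw.2
      have hja : a ∈ plus L := by
        have h := hmem' a (hml ▸ List.mem_cons_self (a := a) (l := _))
        exact ⟨hSL h.1, h.2⟩
      have hjb : (b :: rest).flatten ∈ plus L := by
        have hbS : ∀ y ∈ b :: rest, y ∈ S := fun y hy =>
          (hmem' y (hml ▸ List.mem_cons_of_mem a hy)).1
        have : (b :: rest).flatten ∈ @KStar.kstar (Language α) _ S := Language.join_mem_kstar hbS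
        refine ⟨hS' ▸ this, ?_⟩
        have hbne := (hmem' b (hml ▸ List.mem_cons_of_mem a (List.mem_cons_self (a := b) (l := rest)))).2
        simp only [List.flatten_cons]
        intro hcontra
        exact hbne (List.append_eq_nil_iff.mp hcontra).1
      have : l.flatten = a ++ (b :: rest).flatten := by simpa using hjoin.symm
      rw [this]
      exact Language.append_mem_mul hja hjb
end

section
/- If L is a regular language that is closed (i.e., L = L*), then L^{-*} is also regular. -/
open scoped Computability

namespace InvStarAux

variable {α : Type}

lemma mem_inf {l m : Language α} {x : List α} : x ∈ l ⊓ m ↔ x ∈ l ∧ x ∈ m := Iff.rfl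

lemma mem_compl {l : Language α} {x : List α} : x ∈ lᶜ ↔ x ∉ l := Iff.rfl

/-- Product DFA. -/
def prodDFA {σ1 σ2 : Type} (M1 : DFA α σ1) (M2 : DFA α σ2) : DFA α (σ1 × σ2) where
  step := fun p a => (M1.step p.1 a, M2.step p.2 a)
  start := (M1.start, M2.start)
  accept := {p | p.1 ∈ M1.accept ∧ p.2 ∈ M2.accept}

theorem prodDFA_eval {σ1 σ2 : Type} (M1 : DFA α σ1) (M2 : DFA α σ2) (x : List α) :
    (prodDFA M1 M2).eval x = (M1.eval x, M2.eval x) := by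
  have h : ∀ (x : List α) (s : σ1) (t : σ2),
      (prodDFA M1 M2).evalFrom (s, t) x = (M1.evalFrom s x, M2.evalFrom t x) := by
    intro x
    induction x with
    | nil => intros; rfl
    | cons a x ih => intro s t; exact ih _ _
  exact h x M1.start M2.start

open Classical in
/-- A DFA for the concatenation of the languages of two DFAs. -/
noncomputable def concatDFA {σ1 σ2 : Type} (M1 : DFA α σ1) (M2 : DFA α σ2) :
    DFA α (σ1 × Set σ2) where
  step := fun p a =>
    let q' := M1.step p.1 a
    (q', (fun t => M2.step t a) '' p.2 ∪ if q' ∈ M1.accept then {M2.start} else ∅)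
  start := (M1.start, if M1.start ∈ M1.accept then {M2.start} else ∅)
  accept := {p | ∃ t ∈ p.2, t ∈ M2.accept}

open Classical in
theorem concatDFA_eval {σ1 σ2 : Type} (M1 : DFA α σ1) (M2 : DFA α σ2)
    (u : List α) :
    (concatDFA M1 M2).eval u =
      (M1.eval u,
        {t | ∃ p v, p ++ v = u ∧ M1.eval p ∈ M1.accept ∧ t = M2.evalFrom M2.start v}) := by
  induction u using List.reverseRecOn with
  | nil =>
    refine Prod.ext rfl ?_
    show (if M1.start ∈ M1.accept then ({M2.start} : Set σ2) else ∅) = _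
    ext t
    constructor
    · intro ht
      by_cases h : M1.start ∈ M1.accept
      · simp only [h, if_true, Set.mem_singleton_iff] at ht
        exact ⟨[], [], rfl, h, ht⟩
      · simp [h] at ht
    · rintro ⟨p, v, hpv, hp, rfl⟩
      have hp0 : p = [] := by
        cases p with
        | nil => rfl
        | cons a l => simp at hpv
      have hv0 : v = [] := by
        subst hp0; simpa using hpv
      subst hp0; subst hv0
      simp only [DFA.eval_nil] at hp
      simp [hp]
  | append_singleton u a ih =>
    rw [DFA.eval_append_singleton, DFA.eval_append_singleton, ih]
    refine Prod.ext rfl ?_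
    show _ = {t | ∃ p v, p ++ v = u ++ [a] ∧ _ ∧ _}
    ext t
    simp only [concatDFA, Set.mem_union, Set.mem_image, Set.mem_setOf_eq]
    constructor
    · rintro (⟨s, ⟨p, v, rfl, hp, rfl⟩, rfl⟩ | h)
      · exact ⟨p, v ++ [a], by simp, hp, by simp [DFA.evalFrom_append_singleton]⟩
      · by_cases hacc : M1.step (M1.eval u) a ∈ M1.accept
        · simp only [hacc, if_true, Set.mem_singleton_iff] at h
          exact ⟨u ++ [a], [], by simp, by simpa using hacc, by simp [h]⟩
        · simp [hacc] at h
    · rintro ⟨p, v, hpv, hp, rfl⟩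
      rcases List.eq_nil_or_concat v with rfl | ⟨v', b, rfl⟩
      · right
        simp only [List.append_nil] at hpv
        subst hpv
        rw [DFA.eval_append_singleton] at hp
        simp [hp]
      · left
        rw [List.concat_eq_append, ← List.append_assoc] at hpv
        obtain ⟨hpv', rfl⟩ : p ++ v' = u ∧ b = a := by
          have h1 := congrArg (fun l => l.getLast?) hpv
          have h2 := congrArg List.dropLast hpv
          simp at h1 h2
          exact ⟨h2, h1⟩
        exact ⟨M2.evalFrom M2.start v', ⟨p, v', hpv', hp, rfl⟩,
          by rw [List.concat_eq_append, DFA.evalFrom_append_singleton]⟩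

theorem concatDFA_accepts {σ1 σ2 : Type} (M1 : DFA α σ1) (M2 : DFA α σ2) :
    (concatDFA M1 M2).accepts = M1.accepts * M2.accepts := by
  ext x
  rw [DFA.mem_accepts, concatDFA_eval, Language.mem_mul]
  show (∃ t ∈ _, t ∈ M2.accept) ↔ _
  constructor
  · rintro ⟨t, ⟨p, v, rfl, hp, rfl⟩, ht⟩
    exact ⟨p, hp, v, ht, rfl⟩
  · rintro ⟨p, hp, v, hv, rfl⟩
    exact ⟨M2.evalFrom M2.start v, ⟨p, v, rfl, hp, rfl⟩, hv⟩

theorem isRegular_mul {L M : Language α} (hL : L.IsRegular) (hM : M.IsRegular) :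
    (L * M).IsRegular := by
  obtain ⟨σ1, h1, M1, rfl⟩ := hL
  obtain ⟨σ2, h2, M2, rfl⟩ := hM
  have : Fintype (Set σ2) := Fintype.ofFinite _
  exact ⟨σ1 × Set σ2, inferInstance, concatDFA M1 M2, concatDFA_accepts M1 M2⟩

theorem isRegular_inf {L M : Language α} (hL : L.IsRegular) (hM : M.IsRegular) :
    (L ⊓ M).IsRegular := by
  obtain ⟨σ1, h1, M1, rfl⟩ := hL
  obtain ⟨σ2, h2, M2, rfl⟩ := hM
  refine ⟨σ1 × σ2, inferInstance, prodDFA M1 M2, ?_⟩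
  ext x
  rw [DFA.mem_accepts, prodDFA_eval]
  exact Iff.rfl

theorem isRegular_compl {L : Language α} (hL : L.IsRegular) :
    (Lᶜ : Language α).IsRegular := by
  obtain ⟨σ, h, M, rfl⟩ := hL
  refine ⟨σ, h, ⟨M.step, M.start, M.acceptᶜ⟩, ?_⟩
  ext x
  show List.foldl M.step M.start x ∈ M.acceptᶜ ↔ x ∈ M.acceptsᶜ
  exact Iff.rfl

theorem langOne_isRegular : (1 : Language α).IsRegular := by
  refine ⟨Bool, inferInstance, ⟨fun _ _ => false, true, {true}⟩, ?_⟩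
  ext x
  show List.foldl (fun _ _ => false) true x ∈ ({true} : Set Bool) ↔ x ∈ (1 : Language α)
  cases x with
  | nil => simp [Language.mem_one]
  | cons a x =>
    have h : ∀ (x : List α), List.foldl (fun (_ : Bool) (_ : α) => false) false x = false := by
      intro x
      induction x with
      | nil => rfl
      | cons b x ih => exact ih
    show List.foldl _ false x ∈ _ ↔ _
    rw [h]
    simp [Language.mem_one]

lemma mem_one_iff {x : List α} : x ∈ (1 : Language α) ↔ x = [] :=
  Language.mem_one x

/-- The base of a closed language. -/
def baseLang (L : Language α) : Language α :=
  (L ⊓ (1 : Language α)ᶜ) ⊓ ((L ⊓ (1 : Language α)ᶜ) * (L ⊓ (1 : Language α)ᶜ))ᶜ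

lemma mem_baseLang {L : Language α} {x : List α} :
    x ∈ baseLang L ↔ (x ∈ L ∧ x ≠ []) ∧
      x ∉ (L ⊓ (1 : Language α)ᶜ) * (L ⊓ (1 : Language α)ᶜ) := by
  rw [baseLang, mem_inf, mem_inf, mem_compl, mem_compl, mem_one_iff]

theorem baseLang_kstar (L : Language α) (hL : L = L∗) : (baseLang L)∗ = L := by
  apply le_antisymm
  · calc (baseLang L)∗ ≤ L∗ := by
          apply kstar_mono
          intro x hx
          exact (mem_baseLang.mp hx).1.1
      _ = L := hL.symm
  · have H : ∀ n, ∀ x : List α, x.length ≤ n → x ∈ L → x ∈ (baseLang L)∗ := by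
      intro n
      induction n with
      | zero =>
        intro x hlen _
        have : x = [] := List.eq_nil_of_length_eq_zero (Nat.le_zero.mp hlen)
        subst this
        exact Language.nil_mem_kstar _
      | succ n ih =>
        intro x hlen hx
        by_cases hnil : x = []
        · subst hnil; exact Language.nil_mem_kstar _
        by_cases hbase : x ∈ baseLang L
        · exact Language.mem_kstar.mpr ⟨[x], by simp, by simpa⟩
        · have hmul : x ∈ (L ⊓ (1 : Language α)ᶜ) * (L ⊓ (1 : Language α)ᶜ) := by
            by_contra h
            exact hbase (mem_baseLang.mpr ⟨⟨hx, hnil⟩, h⟩)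
          obtain ⟨u, hu, v, hv, rfl⟩ := Language.mem_mul.mp hmul
          rw [mem_inf, mem_compl, mem_one_iff] at hu hv
          have hupos : 0 < u.length := List.length_pos_iff.mpr hu.2
          have hvpos : 0 < v.length := List.length_pos_iff.mpr hv.2
          rw [List.length_append] at hlen
          have hu' : u ∈ (baseLang L)∗ := ih u (by omega) hu.1
          have hv' : v ∈ (baseLang L)∗ := ih v (by omega) hv.1
          have := Language.append_mem_mul hu' hv'
          rwa [kstar_mul_kstar] at this
    intro x hx
    exact H x.length x le_rfl hx

theorem baseLang_le (L S : Language α) (hS : S∗ = L) :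
    baseLang L ≤ S := by
  intro x hx
  replace hx := mem_baseLang.mp hx
  have hxL : x ∈ S∗ := by rw [hS]; exact hx.1.1
  have hxne : x ≠ [] := hx.1.2
  obtain ⟨W, rfl, hW⟩ := Language.mem_kstar_iff_exists_nonempty.mp hxL
  match W, hW with
  | [], _ => simp at hxne
  | [w], hW => show [w].flatten ∈ (S : Language α); simpa using (hW w (by simp)).1
  | w :: w' :: W, hW =>
    exfalso
    apply hx.2
    have hw : w ∈ L := by
      rw [← hS]; exact Language.mem_kstar.mpr ⟨[w], by simp, by simpa using (hW w (by simp)).1⟩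
    have hrest : (w' :: W).flatten ∈ L := by
      rw [← hS]
      exact Language.join_mem_kstar (fun y hy => (hW y (by simp [hy])).1)
    have h1 : w ∈ L ⊓ (1 : Language α)ᶜ := by
      rw [mem_inf, mem_compl, mem_one_iff]
      exact ⟨hw, (hW w (by simp)).2⟩
    have h2 : (w' :: W).flatten ∈ L ⊓ (1 : Language α)ᶜ := by
      rw [mem_inf, mem_compl, mem_one_iff]
      refine ⟨hrest, ?_⟩
      intro h
      simp only [List.flatten_cons] at h
      exact (hW w' (by simp)) |>.2 (by
        rcases List.append_eq_nil_iff.mp h with ⟨h1, _⟩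
        exact h1)
    exact Language.append_mem_mul h1 h2

theorem invStar_eq_baseLang (L : Language α) (hL : L = L∗) :
    invStar L = baseLang L := by
  apply le_antisymm
  · intro x hx
    exact hx (baseLang L) (baseLang_kstar L hL)
  · intro x hx S hS
    exact baseLang_le L S hS hx

end InvStarAux

/-- If `L` is regular and closed, then so is `L⁻*`. -/
theorem invStar_isRegular {α : Type} (L : Language α) (hL : L = L∗)
    (hreg : L.IsRegular) : (invStar L).IsRegular := by
  rw [InvStarAux.invStar_eq_baseLang L hL]
  have h1 : ((1 : Language α)ᶜ : Language α).IsRegular :=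
    InvStarAux.isRegular_compl InvStarAux.langOne_isRegular
  have hplus : (L ⊓ (1 : Language α)ᶜ).IsRegular := InvStarAux.isRegular_inf hreg h1
  exact InvStarAux.isRegular_inf hplus
    (InvStarAux.isRegular_compl (InvStarAux.isRegular_mul hplus hplus))
end

section
/- Every nonempty palstar has a unique factorization into prime palstars: for every nonempty word w in PALSTAR there is exactly one finite sequence x₁, x₂, …, xₙ of prime palstars such that w = x₁x₂⋯xₙ. -/
open scoped Computability

/-- `PAL` is the set of nonempty even-length palindromes `x ++ xᴿ`. -/
def PAL (α : Type) : Language α := {w | ∃ x : List α, x ≠ [] ∧ w = x ++ x.reverse}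

/-- `PALSTAR` is the Kleene star of `PAL`. -/
def PALSTAR (α : Type) : Language α := (PAL α)∗

/-- A prime palstar: a nonempty palstar that is not a product of two nonempty palstars. -/
def IsPrimePalstar {α : Type} (w : List α) : Prop :=
  w ∈ PALSTAR α ∧ w ≠ [] ∧
    ¬ ∃ u v : List α, u ∈ PALSTAR α ∧ v ∈ PALSTAR α ∧ u ≠ [] ∧ v ≠ [] ∧ w = u ++ v

namespace PalstarAux

open List

variable {α : Type}

lemma mem_pal_iff {w : List α} : w ∈ PAL α ↔ w ≠ [] ∧ w.reverse = w ∧ Even w.length := by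
  constructor
  · rintro ⟨x, hx, rfl⟩
    refine ⟨by simp [hx], by simp, ?_⟩
    simp [Nat.even_add_one, parity_simps]
  · rintro ⟨hne, hrev, m, hm⟩
    refine ⟨w.take m, ?_, ?_⟩
    · have : w.length ≠ 0 := by simpa using hne
      intro h
      have := congrArg List.length h
      simp only [length_take, length_nil] at this
      omega
    · have hdrop : w.drop m = (w.take m).reverse := by
        rw [List.reverse_take]
        rw [hrev]
        congr 1
        omega
      conv_lhs => rw [← List.take_append_drop m w, hdrop]

lemma nil_mem_palstar : ([] : List α) ∈ PALSTAR α := Language.nil_mem_kstar _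

lemma palstar_append {u v : List α} (hu : u ∈ PALSTAR α) (hv : v ∈ PALSTAR α) :
    u ++ v ∈ PALSTAR α := by
  rw [PALSTAR, Language.mem_kstar] at hu hv ⊢
  obtain ⟨L1, rfl, h1⟩ := hu
  obtain ⟨L2, rfl, h2⟩ := hv
  refine ⟨L1 ++ L2, by simp, ?_⟩
  intro y hy
  rcases mem_append.mp hy with h | h
  · exact h1 y h
  · exact h2 y h

lemma palindrome_mem_palstar {w : List α} (hrev : w.reverse = w) (hev : Even w.length) :
    w ∈ PALSTAR α := by
  rcases eq_or_ne w [] with rfl | hne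
  · exact nil_mem_palstar
  · have : w ∈ PAL α := mem_pal_iff.mpr ⟨hne, hrev, hev⟩
    exact ⟨[w], by simp, by simpa⟩

/-- iterated concatenation -/
def pow (l : List α) : ℕ → List α
  | 0 => []
  | k + 1 => l ++ pow l k

lemma length_pow (l : List α) : ∀ k, (pow l k).length = k * l.length
  | 0 => by simp [pow]
  | k + 1 => by simp [pow, length_pow l k]; ring

/-- The conjugacy lemma for words. -/
lemma conj : ∀ (n : ℕ) (u s t : List α), u.length ≤ n → s ++ u = u ++ t → s ≠ [] →
    s.length = t.length →
    ∃ p q k, s = p ++ q ∧ t = q ++ p ∧ u = pow (p ++ q) k ++ p := by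
  intro n
  induction n with
  | zero =>
    intro u s t hlen h _ hst
    have hu : u = [] := by simpa using List.length_eq_zero_iff.mp (Nat.le_zero.mp hlen)
    subst hu
    refine ⟨[], s, 0, by simp, ?_, by simp [pow]⟩
    simpa using h.symm
  | succ n ih =>
    intro u s t hlen h hsne hst
    have hu1 : u <+: s ++ u := by rw [h]; exact prefix_append u t
    have hs1 : s <+: s ++ u := prefix_append s u
    rcases List.prefix_or_prefix_of_prefix hu1 hs1 with hus | hsu
    · obtain ⟨q, rfl⟩ := hus
      refine ⟨u, q, 0, rfl, ?_, by simp [pow]⟩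
      have : u ++ (q ++ u) = u ++ t := by simpa using h
      simpa using (List.append_cancel_left this).symm
    · obtain ⟨u', rfl⟩ := hsu
      have h' : s ++ u' = u' ++ t := by
        have : s ++ (s ++ u') = s ++ (u' ++ t) := by simpa using h
        exact List.append_cancel_left this
      have hslen : 1 ≤ s.length := by
        rcases s with _ | ⟨a, s⟩
        · exact absurd rfl hsne
        · simp
      have hlen' : u'.length ≤ n := by
        have := hlen
        simp only [length_append] at this
        omega
      obtain ⟨p, q, k, hpq, hqp, hu'⟩ := ih u' s t hlen' h' hsne hst
      exact ⟨p, q, k + 1, hpq, hqp, by rw [hu', hpq]; simp [pow, append_assoc]⟩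

/-- Key lemma: if a nonempty palstar is a proper prefix of an even palindrome `v`,
then `v` is a product of two nonempty palstars. -/
lemma split_of_proper_prefix {v u : List α} (hv : v ∈ PAL α)
    (hu : u ∈ PALSTAR α) (hune : u ≠ []) (hpre : u <+: v) (hne : u ≠ v) :
    ∃ a b : List α, a ∈ PALSTAR α ∧ b ∈ PALSTAR α ∧ a ≠ [] ∧ b ≠ [] ∧ v = a ++ b := by
  -- first reduce to the case where u is itself an even palindrome (first PAL factor)
  obtain ⟨L, rfl, hL⟩ := Language.mem_kstar.mp hu
  rcases L with _ | ⟨u₁, L⟩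
  · exact absurd rfl hune
  have hu₁ : u₁ ∈ PAL α := hL u₁ (by simp)
  obtain ⟨hu₁ne, hu₁rev, hu₁ev⟩ := mem_pal_iff.mp hu₁
  have hpre' : u₁ ++ L.flatten <+: v := hpre
  have hpre₁ : u₁ <+: v := (prefix_append u₁ L.flatten).trans hpre'
  have hne₁ : u₁ ≠ v := by
    rintro rfl
    apply hne
    obtain ⟨r, hr⟩ := hpre'
    have h0 : L.flatten ++ r = [] := by
      have := hr
      conv_rhs at this => rw [← List.append_nil u₁]
      rw [append_assoc] at this
      exact List.append_cancel_left this
    have : L.flatten = [] := by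
      rcases List.append_eq_nil_iff.mp h0 with ⟨h, _⟩; exact h
    simp [flatten_cons, this]
  clear hne hune hpre hu hL
  -- now u₁ is a nonempty even palindrome, proper prefix of v
  obtain ⟨hvne, hvrev, hvev⟩ := mem_pal_iff.mp hv
  obtain ⟨t, rfl⟩ := hpre₁
  have htne : t ≠ [] := by rintro rfl; exact hne₁ (by simp)
  -- palindromicity gives  t.reverse ++ u₁ = u₁ ++ t
  have key : t.reverse ++ u₁ = u₁ ++ t := by
    conv_rhs => rw [← hvrev]
    rw [reverse_append, hu₁rev]
  obtain ⟨p, q, k, hpq, hqp, hu'⟩ :=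
    conj u₁.length u₁ t.reverse t le_rfl key (by simpa using htne) (by simp)
  -- p and q are palindromes
  have hrev2 : p ++ q = p.reverse ++ q.reverse := by
    rw [← hpq, hqp, reverse_append]
  obtain ⟨hp, hq⟩ := List.append_inj hrev2 (by simp)
  have hprev : p.reverse = p := hp.symm
  have hqrev : q.reverse = q := hq.symm
  -- parity
  have htev : Even t.length := by
    have h1 : Even (u₁ ++ t).length := hvev
    simp only [length_append] at h1
    have h2 := hu₁ev
    rw [Nat.even_add] at h1
    exact h1.mp h2
  have hpev : Even p.length := by
    have h1 : Even (pow (p ++ q) k ++ p).length := hu' ▸ hu₁ev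
    simp only [length_append, length_pow] at h1
    have hd : (p ++ q).length = t.length := by
      have := congrArg List.length hqp
      simp only [length_append] at this ⊢
      omega
    simp only [length_append] at hd
    have : Even (k * (p.length + q.length)) := by
      rw [hd]; exact htev.mul_left k
    rw [Nat.even_add] at h1
    exact h1.mp this
  have hqev : Even q.length := by
    have := congrArg List.length hqp
    simp only [length_append] at this
    rw [this] at htev
    rw [Nat.even_add] at htev
    exact htev.mpr hpev
  -- conclude: v = u₁ ++ (q ++ p), and q ++ p is a palstar
  refine ⟨u₁, t, ?_, ?_, hu₁ne, htne, rfl⟩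
  · exact palindrome_mem_palstar hu₁rev hu₁ev
  · rw [hqp]
    exact palstar_append (palindrome_mem_palstar hqrev hqev)
      (palindrome_mem_palstar hprev hpev)

lemma prime_mem_pal {w : List α} (h : IsPrimePalstar w) : w ∈ PAL α := by
  obtain ⟨hstar, hne, hnot⟩ := h
  obtain ⟨L, rfl, hL⟩ := Language.mem_kstar.mp hstar
  rcases L with _ | ⟨x, L⟩
  · exact absurd rfl hne
  rcases L with _ | ⟨y, L⟩
  · simpa using hL x (by simp)
  exfalso
  apply hnot
  have hx : x ∈ PAL α := hL x (by simp)
  have hy : y ∈ PAL α := hL y (by simp)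
  have hxne : x ≠ [] := (mem_pal_iff.mp hx).1
  have hyne : y ≠ [] := (mem_pal_iff.mp hy).1
  refine ⟨x, (y :: L).flatten, ⟨[x], by simp, by simpa⟩, ?_, hxne, ?_, by simp⟩
  · exact Language.join_mem_kstar fun z hz => hL z (by simp [hz])
  · simp only [flatten_cons, ne_eq, append_eq_nil_iff, not_and]
    intro h; exact absurd h hyne

lemma prime_prefix_eq {a b : List α} (ha : IsPrimePalstar a) (hb : IsPrimePalstar b)
    (hpre : a <+: b) : a = b := by
  by_contra hne
  obtain ⟨u, v, h⟩ := split_of_proper_prefix (prime_mem_pal hb) ha.1 ha.2.1 hpre hne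
  exact hb.2.2 ⟨u, v, h⟩

lemma exists_factorization : ∀ (n : ℕ) (w : List α), w.length ≤ n → w ∈ PALSTAR α → w ≠ [] →
    ∃ l : List (List α), (∀ x ∈ l, IsPrimePalstar x) ∧ w = l.flatten := by
  intro n
  induction n with
  | zero =>
    intro w hlen _ hne
    exact absurd (List.length_eq_zero_iff.mp (Nat.le_zero.mp hlen)) hne
  | succ n ih =>
    intro w hlen hw hne
    by_cases hp : IsPrimePalstar w
    · exact ⟨[w], by simpa, by simp⟩
    · have : ∃ u v : List α, u ∈ PALSTAR α ∧ v ∈ PALSTAR α ∧ u ≠ [] ∧ v ≠ [] ∧ w = u ++ v := by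
        by_contra hc
        exact hp ⟨hw, hne, hc⟩
      obtain ⟨u, v, hu, hv, hune, hvne, rfl⟩ := this
      have hul : 1 ≤ u.length := List.length_pos_iff.mpr hune
      have hvl : 1 ≤ v.length := List.length_pos_iff.mpr hvne
      have hlu : u.length ≤ n := by
        simp only [length_append] at hlen; omega
      have hlv : v.length ≤ n := by
        simp only [length_append] at hlen; omega
      obtain ⟨l₁, h₁, rfl⟩ := ih u hlu hu hune
      obtain ⟨l₂, h₂, rfl⟩ := ih v hlv hv hvne
      refine ⟨l₁ ++ l₂, ?_, by simp⟩
      intro x hx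
      rcases mem_append.mp hx with h | h
      · exact h₁ x h
      · exact h₂ x h

lemma factorization_unique : ∀ (n : ℕ) (l₁ l₂ : List (List α)), l₁.flatten.length ≤ n →
    (∀ x ∈ l₁, IsPrimePalstar x) → (∀ x ∈ l₂, IsPrimePalstar x) →
    l₁.flatten = l₂.flatten → l₁ = l₂ := by
  intro n
  induction n with
  | zero =>
    intro l₁ l₂ hlen h₁ h₂ hflat
    rcases l₁ with _ | ⟨a, A⟩
    · rcases l₂ with _ | ⟨b, B⟩
      · rfl
      · exfalso
        have hbne : b ≠ [] := (h₂ b (by simp)).2.1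
        have : b ++ B.flatten = [] := by simpa using hflat.symm
        exact hbne (List.append_eq_nil_iff.mp this).1
    · exfalso
      have hane : a ≠ [] := (h₁ a (by simp)).2.1
      have : (a ++ A.flatten).length = 0 := by
        simpa using Nat.le_zero.mp hlen
      simp only [length_append] at this
      exact hane (List.length_eq_zero_iff.mp (by omega))
  | succ n ih =>
    intro l₁ l₂ hlen h₁ h₂ hflat
    rcases l₁ with _ | ⟨a, A⟩
    · rcases l₂ with _ | ⟨b, B⟩
      · rfl
      · exfalso
        have hbne : b ≠ [] := (h₂ b (by simp)).2.1
        have : b ++ B.flatten = [] := by simpa using hflat.symm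
        exact hbne (List.append_eq_nil_iff.mp this).1
    · rcases l₂ with _ | ⟨b, B⟩
      · exfalso
        have hane : a ≠ [] := (h₁ a (by simp)).2.1
        have : a ++ A.flatten = [] := by simpa using hflat
        exact hane (List.append_eq_nil_iff.mp this).1
      · have ha : IsPrimePalstar a := h₁ a (by simp)
        have hb : IsPrimePalstar b := h₂ b (by simp)
        rw [flatten_cons, flatten_cons] at hflat
        have hab : a = b := by
          have hpa : a <+: a ++ A.flatten := prefix_append _ _
          have hpb : b <+: a ++ A.flatten := hflat ▸ prefix_append _ _
          rcases List.prefix_or_prefix_of_prefix hpa hpb with h | h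
          · exact prime_prefix_eq ha hb h
          · exact (prime_prefix_eq hb ha h).symm
        subst hab
        have htail : A.flatten = B.flatten := List.append_cancel_left hflat
        have hal : 1 ≤ a.length := List.length_pos_iff.mpr ha.2.1
        have hAlen : A.flatten.length ≤ n := by
          rw [flatten_cons] at hlen
          simp only [length_append] at hlen
          omega
        have : A = B := ih A B hAlen (fun x hx => h₁ x (by simp [hx]))
          (fun x hx => h₂ x (by simp [hx])) htail
        rw [this]

end PalstarAux

/-- Every nonempty palstar has a unique factorization into prime palstars. -/
theorem palstar_unique_factorization {α : Type} (w : List α)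
    (hw : w ∈ PALSTAR α) (hne : w ≠ []) :
    ∃! l : List (List α), (∀ x ∈ l, IsPrimePalstar x) ∧ w = l.flatten := by
  obtain ⟨l, hl, hflat⟩ :=
    PalstarAux.exists_factorization w.length w le_rfl hw hne
  refine ⟨l, ⟨hl, hflat⟩, ?_⟩
  rintro l' ⟨hl', hflat'⟩
  exact PalstarAux.factorization_unique w.length l' l
    (by rw [← hflat']) hl' hl (by rw [← hflat', ← hflat])
end

section
/- Every prime palstar is a palindrome of even length. -/
open scoped Computability

lemma pal_ne_nil {α : Type} {y : List α} (hy : y ∈ PAL α) : y ≠ [] := by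
  obtain ⟨x, hx, rfl⟩ := hy
  simp [hx]

lemma pal_mem_palstar {α : Type} {y : List α} (hy : y ∈ PAL α) : y ∈ PALSTAR α := by
  rw [PALSTAR, Language.mem_kstar]
  exact ⟨[y], by simp, by simpa using hy⟩

/-- Every prime palstar is a palindrome of even length. -/
theorem primePalstar_palindrome_even {α : Type} (w : List α)
    (hw : IsPrimePalstar w) : w.reverse = w ∧ Even w.length := by
  obtain ⟨hstar, hne, hnot⟩ := hw
  rw [PALSTAR, Language.mem_kstar] at hstar
  obtain ⟨L, rfl, hmem⟩ := hstar
  match L, hne, hmem, hnot with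
  | [], hne, _, _ => exact absurd rfl hne
  | [y], _, hmem, _ =>
    have hy : y ∈ PAL α := hmem y (by simp)
    obtain ⟨x, hx, rfl⟩ := hy
    constructor
    · simp
    · simp [Nat.even_add]
  | y :: z :: rest, _, hmem, hnot =>
    exfalso
    apply hnot
    refine ⟨y, (z :: rest).flatten, pal_mem_palstar (hmem y (by simp)), ?_, ?_, ?_, by simp⟩
    · rw [PALSTAR, Language.mem_kstar]
      exact ⟨z :: rest, rfl, fun u hu => hmem u (by simp [hu])⟩
    · exact pal_ne_nil (hmem y (by simp))
    · have hz := pal_ne_nil (hmem z (by simp))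
      simp [hz]
end

section
/- A word w over an alphabet Σ is a prime palstar if and only if there exists a nonempty unbordered word z over Σ such that w is the perfect shuffle of z with its reversal, i.e., w = z ⧢ zᴿ. -/
open scoped Computability

/-- A word is bordered if it has the form `x ++ y ++ x` with `x` nonempty. -/
def Bordered {α : Type} (w : List α) : Prop := ∃ x y : List α, x ≠ [] ∧ w = x ++ y ++ x


/-- Perfect shuffle of two words (of equal length). -/
def pshuffle {α : Type} : List α → List α → List α
  | a :: x, b :: y => a :: b :: pshuffle x y
  | _, _ => []

section Aux

variable {α : Type}

lemma pshuffle_nil_left (y : List α) : pshuffle [] y = [] := by cases y <;> rfl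

lemma pshuffle_cons (a b : α) (x y : List α) :
    pshuffle (a :: x) (b :: y) = a :: b :: pshuffle x y := rfl

lemma pshuffle_append : ∀ (x x' y y' : List α), x.length = x'.length →
    pshuffle (x ++ y) (x' ++ y') = pshuffle x x' ++ pshuffle y y'
  | [], [], y, y', _ => by simp [pshuffle_nil_left]
  | [], _ :: _, _, _, h => by simp at h
  | _ :: _, [], _, _, h => by simp at h
  | a :: x, b :: x', y, y', h => by
    simp only [List.cons_append, pshuffle_cons]
    rw [pshuffle_append x x' y y' (by simpa using h)]

lemma length_pshuffle : ∀ (x y : List α), x.length = y.length →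
    (pshuffle x y).length = 2 * x.length
  | [], [], _ => by simp [pshuffle]
  | [], _ :: _, h => by simp at h
  | _ :: _, [], h => by simp at h
  | a :: x, b :: y, h => by
    rw [pshuffle_cons]
    simp [length_pshuffle x y (by simpa using h)]
    ring

lemma pshuffle_reverse : ∀ (x y : List α), x.length = y.length →
    (pshuffle x y).reverse = pshuffle y.reverse x.reverse
  | [], [], _ => by simp [pshuffle]
  | [], _ :: _, h => by simp at h
  | _ :: _, [], h => by simp at h
  | a :: x, b :: y, h => by
    have h' : x.length = y.length := by simpa using h
    simp only [pshuffle_cons, List.reverse_cons]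
    rw [pshuffle_append y.reverse x.reverse [b] [a] (by simp [h'.symm]),
      ← pshuffle_reverse x y h']
    simp [pshuffle]

lemma pshuffle_inj : ∀ (a b c d : List α), a.length = b.length → c.length = d.length →
    pshuffle a b = pshuffle c d → a = c ∧ b = d
  | [], b, c, d, h1, h2, h3 => by
    have hb : b = [] := List.length_eq_zero_iff.mp (by simpa using h1.symm)
    subst hb
    cases c with
    | nil =>
      have : d = [] := List.length_eq_zero_iff.mp (by simpa using h2.symm)
      subst this; exact ⟨rfl, rfl⟩
    | cons c0 c =>
      cases d with
      | nil => simp at h2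
      | cons d0 d => simp [pshuffle, pshuffle_nil_left] at h3
  | a0 :: a, b, c, d, h1, h2, h3 => by
    cases b with
    | nil => simp at h1
    | cons b0 b =>
      cases c with
      | nil =>
        have : d = [] := List.length_eq_zero_iff.mp (by simpa using h2.symm)
        subst this; simp [pshuffle] at h3
      | cons c0 c =>
        cases d with
        | nil => simp at h2
        | cons d0 d =>
          simp only [pshuffle_cons, List.cons.injEq] at h3
          obtain ⟨h4, h5, h6⟩ := h3
          obtain ⟨ha, hb⟩ := pshuffle_inj a b c d (by simpa using h1)
            (by simpa using h2) h6
          exact ⟨by rw [h4, ha], by rw [h5, hb]⟩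

lemma take_ne_nil_of_pos (z : List α) (k : ℕ) (hk : 0 < k) (hkn : k ≤ z.length) :
    z.take k ≠ [] := by
  have hlen : (z.take k).length = k := by rw [List.length_take]; omega
  intro h
  rw [h] at hlen
  simp at hlen
  omega

lemma mem_PAL_of_palindrome (w : List α) (n : ℕ) (hl : w.length = 2 * n)
    (hn : w ≠ []) (hp : w.reverse = w) : w ∈ PAL α := by
  have hwpos : 0 < w.length := List.length_pos_iff.mpr hn
  have hnpos : 0 < n := by omega
  have hle : n ≤ w.length := by omega
  have hdrop : w.drop n = (w.take n).reverse := by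
    have h1 : w.take n = (w.drop n).reverse := by
      conv_lhs => rw [← hp]
      rw [List.take_reverse]
      congr 2
      omega
    rw [h1, List.reverse_reverse]
  exact ⟨w.take n, take_ne_nil_of_pos w n hnpos hle, by
    conv_lhs => rw [← List.take_append_drop n w]
    rw [hdrop]⟩

lemma pshuffle_self_ne_nil (z : List α) (hz : z ≠ []) : pshuffle z z.reverse ≠ [] := by
  have hlen : (pshuffle z z.reverse).length = 2 * z.length :=
    length_pshuffle z z.reverse (by simp)
  have hzpos : 0 < z.length := List.length_pos_iff.mpr hz
  exact List.length_pos_iff.mp (by rw [hlen]; omega)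

lemma pshuffle_self_mem_PAL (z : List α) (hz : z ≠ []) :
    pshuffle z z.reverse ∈ PAL α := by
  refine mem_PAL_of_palindrome _ z.length (length_pshuffle z z.reverse (by simp))
    (pshuffle_self_ne_nil z hz) ?_
  rw [pshuffle_reverse z z.reverse (by simp), List.reverse_reverse]

lemma mem_PALSTAR_of_mem_PAL {w : List α} (h : w ∈ PAL α) : w ∈ PALSTAR α := by
  show w ∈ (PAL α)∗
  exact Language.mem_kstar.mpr ⟨[w], by simp, by simpa using h⟩

lemma nil_mem_PALSTAR : ([] : List α) ∈ PALSTAR α := Language.nil_mem_kstar _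

lemma append_mem_PALSTAR {u v : List α} (hu : u ∈ PALSTAR α) (hv : v ∈ PALSTAR α) :
    u ++ v ∈ PALSTAR α := by
  obtain ⟨S, rfl, hS⟩ := Language.mem_kstar.mp hu
  obtain ⟨T, rfl, hT⟩ := Language.mem_kstar.mp hv
  exact Language.mem_kstar.mpr ⟨S ++ T, by simp, by
    intro y hy
    rcases List.mem_append.mp hy with h | h
    · exact hS y h
    · exact hT y h⟩

/-- Odd-indexed letters. -/
def odds : List α → List α
  | [] => []
  | [a] => [a]
  | a :: _ :: t => a :: odds t

/-- Even-indexed letters. -/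
def evens (l : List α) : List α := odds l.tail

lemma odds_cons (a : α) (t : List α) : odds (a :: t) = a :: evens t := by
  cases t <;> rfl

lemma evens_cons (a : α) (t : List α) : evens (a :: t) = odds t := rfl

lemma length_odds_add_evens : ∀ l : List α, (odds l).length + (evens l).length = l.length
  | [] => rfl
  | [a] => rfl
  | a :: c :: t => by
    have := length_odds_add_evens t
    simp only [odds_cons, evens_cons, List.length_cons] at this ⊢
    omega

lemma key_shuffle : ∀ u : List α,
    pshuffle (odds u ++ (evens u).reverse) (evens u ++ (odds u).reverse) = u ++ u.reverse
  | [] => rfl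
  | [a] => rfl
  | a :: c :: t => by
    have hlen : (odds t ++ (evens t).reverse).length
        = (evens t ++ (odds t).reverse).length := by
      simp
      omega
    simp only [odds_cons, evens_cons]
    calc pshuffle ((a :: odds t) ++ (c :: evens t).reverse)
          ((c :: evens t) ++ (a :: odds t).reverse)
        = pshuffle (a :: ((odds t ++ (evens t).reverse) ++ [c]))
            (c :: ((evens t ++ (odds t).reverse) ++ [a])) := by
          simp
      _ = a :: c :: pshuffle ((odds t ++ (evens t).reverse) ++ [c])
            ((evens t ++ (odds t).reverse) ++ [a]) := pshuffle_cons ..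
      _ = a :: c :: (pshuffle (odds t ++ (evens t).reverse) (evens t ++ (odds t).reverse)
            ++ pshuffle [c] [a]) := by
          rw [pshuffle_append _ _ _ _ hlen]
      _ = a :: c :: ((t ++ t.reverse) ++ [c, a]) := by
          rw [key_shuffle t]; rfl
      _ = (a :: c :: t) ++ (a :: c :: t).reverse := by simp

lemma shuffle_decomp (x y : List α) :
    pshuffle (x ++ y ++ x) (x ++ y ++ x).reverse
      = pshuffle x x.reverse ++ (pshuffle y y.reverse ++ pshuffle x x.reverse) := by
  have h1 : (x ++ y ++ x).reverse = x.reverse ++ (y.reverse ++ x.reverse) := by simp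
  rw [h1, List.append_assoc,
    pshuffle_append x x.reverse (y ++ x) (y.reverse ++ x.reverse) (by simp),
    pshuffle_append y y.reverse x x.reverse (by simp)]

lemma bordered_of_border (z : List α) :
    ∀ k, 0 < k → k < z.length → z.take k = z.drop (z.length - k) → Bordered z := by
  intro k
  induction k using Nat.strong_induction_on with
  | _ k ih =>
    intro hk hkn heq
    by_cases h2 : 2 * k ≤ z.length
    · refine ⟨z.take k, (z.drop k).take (z.length - 2 * k),
        take_ne_nil_of_pos z k hk (by omega), ?_⟩
      conv_lhs => rw [← List.take_append_drop k z]
      rw [List.append_assoc]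
      congr 1
      conv_lhs => rw [← List.take_append_drop (z.length - 2 * k) (z.drop k)]
      congr 1
      rw [List.drop_drop, heq]
      congr 1
      omega
    · push_neg at h2
      have hk'pos : 0 < k - (z.length - k) := by omega
      have hk'lt : k - (z.length - k) < k := by omega
      have hxlen : (z.take k).length = k := by rw [List.length_take]; omega
      have hlen' : (z.take (z.length - k)).length = z.length - k := by
        rw [List.length_take]; omega
      have htlen : ((z.take k).drop (z.length - k)).length = k - (z.length - k) := by
        rw [List.length_drop, hxlen]
      have hzlx : z = z.take (z.length - k) ++ z.take k := by
        conv_lhs => rw [← List.take_append_drop (z.length - k) z]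
        rw [← heq]
      have hxlt : z.take k
          = z.take (z.length - k) ++ (z.take k).drop (z.length - k) := by
        conv_lhs => rw [← List.take_append_drop (z.length - k) (z.take k)]
        rw [List.take_take]
        congr 2
        omega
      have hxtr : z.take k = (z.take k).drop (z.length - k) ++ z.drop k := by
        have e1 : z = z.take (z.length - k)
            ++ (z.take (z.length - k) ++ (z.take k).drop (z.length - k)) := by
          conv_lhs => rw [hzlx]
          rw [← hxlt]
        have e2 : z = z.take (z.length - k)
            ++ ((z.take k).drop (z.length - k) ++ z.drop k) := by
          conv_lhs => rw [← List.take_append_drop k z]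
          conv_lhs => rw [hxlt]
          rw [List.append_assoc]
        have e3 := List.append_cancel_left (e1.symm.trans e2)
        rw [← hxlt] at e3
        exact e3
      have h1 : z.take (k - (z.length - k)) = (z.take k).drop (z.length - k) := by
        have e : z.take (k - (z.length - k))
            = (z.take k).take (k - (z.length - k)) := by
          rw [List.take_take]
          congr 1
          omega
        rw [e]
        conv_lhs => rw [hxtr]
        exact List.take_left' htlen
      obtain ⟨N, hN⟩ : ∃ N, N = z.length - (k - (z.length - k)) := ⟨_, rfl⟩
      have h2' : z.drop N = (z.take k).drop (z.length - k) := by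
        conv_lhs => rw [hzlx]
        rw [show N = (z.take (z.length - k)).length + (z.length - k) by
          rw [hN, hlen']; omega]
        exact List.drop_length_add_append _
      rw [hN] at h2'
      exact ih _ hk'lt hk'pos (by omega) (h1.trans h2'.symm)

lemma bordered_of_pal_prefix (z q r : List α) (hq : q ≠ []) (hr : r ≠ [])
    (h : pshuffle z z.reverse = (q ++ q.reverse) ++ r) : Bordered z := by
  have hkpos : 0 < q.length := List.length_pos_iff.mpr hq
  have hlen : (pshuffle z z.reverse).length = 2 * z.length :=
    length_pshuffle z z.reverse (by simp)
  have hrlen : 2 * z.length = 2 * q.length + r.length := by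
    have h' := congrArg List.length h
    rw [hlen] at h'
    simp at h'
    omega
  have hkn : q.length < z.length := by
    have : 0 < r.length := List.length_pos_iff.mpr hr
    omega
  have htklen : (z.take q.length).length = q.length := by
    rw [List.length_take]; omega
  have htklen' : (z.reverse.take q.length).length = q.length := by
    rw [List.length_take, List.length_reverse]; omega
  have hsplit : pshuffle z z.reverse
      = pshuffle (z.take q.length) (z.reverse.take q.length)
        ++ pshuffle (z.drop q.length) (z.reverse.drop q.length) := by
    have e := pshuffle_append (z.take q.length) (z.reverse.take q.length)
      (z.drop q.length) (z.reverse.drop q.length) (htklen.trans htklen'.symm)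
    rw [List.take_append_drop, List.take_append_drop] at e
    exact e
  have hlen1 : (pshuffle (z.take q.length) (z.reverse.take q.length)).length
      = (q ++ q.reverse).length := by
    rw [length_pshuffle _ _ (htklen.trans htklen'.symm), htklen]
    simp
    ring
  have hfirst : pshuffle (z.take q.length) (z.reverse.take q.length) = q ++ q.reverse :=
    (List.append_inj (hsplit.symm.trans h) hlen1).1
  have h8 : pshuffle ((z.reverse.take q.length).reverse) ((z.take q.length).reverse)
      = pshuffle (z.take q.length) (z.reverse.take q.length) := by
    rw [← pshuffle_reverse _ _ (htklen.trans htklen'.symm), hfirst]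
    simp
  obtain ⟨hA, -⟩ := pshuffle_inj _ _ _ _
    (by rw [List.length_reverse, List.length_reverse, htklen, htklen'])
    (htklen.trans htklen'.symm) h8
  have hB : (z.reverse.take q.length).reverse = z.drop (z.length - q.length) := by
    rw [List.take_reverse, List.reverse_reverse]
  exact bordered_of_border z q.length hkpos hkn (hA.symm.trans hB)

end Aux

/-- A word is a prime palstar iff it is the perfect shuffle of a nonempty
unbordered word with its reversal. -/
theorem primePalstar_iff_shuffle_unbordered {α : Type} (w : List α) :
    IsPrimePalstar w ↔
      ∃ z : List α, z ≠ [] ∧ ¬ Bordered z ∧ w = pshuffle z z.reverse := by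
  constructor
  · rintro ⟨hw, hne, hnd⟩
    obtain ⟨S, rfl, hS⟩ := Language.mem_kstar.mp hw
    cases S with
    | nil => exact absurd rfl hne
    | cons p S' =>
      have hp : p ∈ PAL α := hS p (by simp)
      by_cases hS' : S'.flatten = []
      · have hw_eq : (p :: S').flatten = p := by simp [List.flatten, hS']
        obtain ⟨u, hu, hpu⟩ := hp
        have hrev : (odds u ++ (evens u).reverse).reverse
            = evens u ++ (odds u).reverse := by simp
        refine ⟨odds u ++ (evens u).reverse, ?_, ?_, ?_⟩
        · cases u with
          | nil => exact absurd rfl hu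
          | cons a t => simp [odds_cons]
        · rintro ⟨x, y, hx, hzeq⟩
          apply hnd
          have hw2 : (p :: S').flatten
              = pshuffle x x.reverse ++ (pshuffle y y.reverse ++ pshuffle x x.reverse) := by
            rw [hw_eq, hpu, ← key_shuffle u, ← hrev, hzeq, shuffle_decomp]
          refine ⟨pshuffle x x.reverse, pshuffle y y.reverse ++ pshuffle x x.reverse,
            mem_PALSTAR_of_mem_PAL (pshuffle_self_mem_PAL x hx), ?_, ?_, ?_, hw2⟩
          · refine append_mem_PALSTAR ?_
              (mem_PALSTAR_of_mem_PAL (pshuffle_self_mem_PAL x hx))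
            by_cases hy : y = []
            · subst hy
              simp only [List.reverse_nil]
              rw [show pshuffle ([] : List α) [] = [] from rfl]
              exact nil_mem_PALSTAR
            · exact mem_PALSTAR_of_mem_PAL (pshuffle_self_mem_PAL y hy)
          · exact pshuffle_self_ne_nil x hx
          · intro hcon
            exact pshuffle_self_ne_nil x hx (List.append_eq_nil_iff.mp hcon).2
        · rw [hw_eq, hpu, ← key_shuffle u, ← hrev]
      · exfalso
        apply hnd
        obtain ⟨u, hu, hpu⟩ := hp
        refine ⟨p, S'.flatten, mem_PALSTAR_of_mem_PAL (hS p (by simp)),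
          Language.mem_kstar.mpr ⟨S', rfl, fun y hy => hS y (by simp [hy])⟩, ?_, hS', by simp⟩
        rw [hpu]
        simp [hu]
  · rintro ⟨z, hz, hnb, rfl⟩
    refine ⟨mem_PALSTAR_of_mem_PAL (pshuffle_self_mem_PAL z hz),
      pshuffle_self_ne_nil z hz, ?_⟩
    rintro ⟨u, v, hu, hv, hune, hvne, heq⟩
    obtain ⟨S, hSu, hS⟩ := Language.mem_kstar.mp hu
    cases S with
    | nil => exact hune (by simp [hSu])
    | cons p S' =>
      obtain ⟨q, hq, hpq⟩ := hS p (by simp)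
      apply hnb
      apply bordered_of_pal_prefix z q (S'.flatten ++ v) hq
      · intro hcon
        exact hvne (List.append_eq_nil_iff.mp hcon).2
      · rw [heq, hSu, hpq]
        simp [List.append_assoc]
end

section
/- Let a, b, c, d be positive integers. The word w = 1 0^a 1 0^b 1 0^c 1 0^d over the alphabet {0,1} is unbordered if and only if a < d and (a ≠ c or b < d). -/
private lemma blk (s : ℕ) (t : List (Fin 2)) (i : ℕ) :
    ([1] ++ (List.replicate s (0 : Fin 2) ++ t))[i]? =
      if i = 0 then some 1 else if i ≤ s then some 0 else t[i - (s+1)]? := by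
  match i with
  | 0 => simp
  | (j+1) =>
    show ((1 : Fin 2) :: (List.replicate s (0:Fin 2) ++ t))[j+1]? = _
    rw [List.getElem?_cons_succ, if_neg (by omega)]
    by_cases h : j < s
    · rw [List.getElem?_append_left (by simpa using h), List.getElem?_replicate,
        if_pos h, if_pos (by omega)]
    · rw [List.getElem?_append_right (by simpa using h), if_neg (by omega),
        List.length_replicate]
      congr 1
      omega

private lemma char (a b c d i : ℕ) (hi : i < 4+a+b+c+d) :
    ([1] ++ (List.replicate a (0:Fin 2) ++ ([1] ++ (List.replicate b 0 ++
      ([1] ++ (List.replicate c 0 ++ ([1] ++ (List.replicate d 0 ++ []))))))))[i]? =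
    some (if i = 0 ∨ i = 1+a ∨ i = 2+a+b ∨ i = 3+a+b+c then (1 : Fin 2) else 0) := by
  rw [blk, blk, blk, blk]
  simp only [List.getElem?_nil]
  split_ifs <;> first | rfl | omega

private lemma ite10 {p q : Prop} [Decidable p] [Decidable q]
    (h : (if p then (1 : Fin 2) else 0) = (if q then 1 else 0)) : p ↔ q := by
  split_ifs at h <;> simp_all

set_option maxHeartbeats 1000000 in
private lemma fwd {a b c d : ℕ} (ha : 1 ≤ a) (hb : 1 ≤ b) (hc : 1 ≤ c) (hd : 1 ≤ d)
    (h : Bordered ([1] ++ List.replicate a 0 ++ [1] ++ List.replicate b 0 ++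
        [1] ++ List.replicate c 0 ++ [1] ++ List.replicate d (0 : Fin 2))) :
    d ≤ a ∨ (a = c ∧ d ≤ b) := by
  obtain ⟨x, y, hx, hw⟩ := h
  set w : List (Fin 2) := [1] ++ List.replicate a 0 ++ [1] ++ List.replicate b 0 ++
        [1] ++ List.replicate c 0 ++ [1] ++ List.replicate d (0 : Fin 2) with hwdef
  have hwshape : w = [1] ++ (List.replicate a (0:Fin 2) ++ ([1] ++ (List.replicate b 0 ++
      ([1] ++ (List.replicate c 0 ++ ([1] ++ (List.replicate d 0 ++ []))))))) := by
    simp [hwdef, List.append_assoc]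
  have hL : w.length = 4+a+b+c+d := by
    simp [hwshape]; omega
  set n := x.length with hn
  have hn0 : 0 < n := List.length_pos_iff.mpr hx
  have hlen : n + y.length + n = 4+a+b+c+d := by
    have := congrArg List.length hw
    simp [hL] at this
    omega
  have key : ∀ i, i < n →
      ((i = 0 ∨ i = 1+a ∨ i = 2+a+b ∨ i = 3+a+b+c) ↔
       ((n + y.length + i) = 0 ∨ (n + y.length + i) = 1+a ∨
        (n + y.length + i) = 2+a+b ∨ (n + y.length + i) = 3+a+b+c)) := by
    intro i hi
    apply ite10
    have e1 : w[i]? = x[i]? := by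
      rw [hw, show x ++ y ++ x = x ++ (y ++ x) by simp, List.getElem?_append_left hi]
    have e2 : w[n + y.length + i]? = x[i]? := by
      rw [hw, List.getElem?_append_right (by simp only [List.length_append, ← hn]; omega)]
      congr 1
      simp only [List.length_append, ← hn]
      omega
    have c1 := char a b c d i (by omega)
    have c2 := char a b c d (n + y.length + i) (by omega)
    rw [hwshape] at e1 e2
    rw [c1] at e1
    rw [c2] at e2
    rw [← e2] at e1
    exact Option.some.inj e1
  have k0 := key 0
  have k1 := key (1+a)
  have k2 := key (1+b)
  have k3 := key (1+c)
  have k4 := key (2+a+b)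
  omega

private lemma bwd {a b c d : ℕ} (ha : 1 ≤ a) (hb : 1 ≤ b) (hc : 1 ≤ c) (hd : 1 ≤ d)
    (h : d ≤ a ∨ (a = c ∧ d ≤ b)) :
    Bordered ([1] ++ List.replicate a 0 ++ [1] ++ List.replicate b 0 ++
        [1] ++ List.replicate c 0 ++ [1] ++ List.replicate d (0 : Fin 2)) := by
  rcases h with h | ⟨rfl, h⟩
  · refine ⟨[1] ++ List.replicate d 0,
      List.replicate (a-d) 0 ++ [1] ++ List.replicate b 0 ++ [1] ++ List.replicate c 0,
      by simp, ?_⟩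
    have h1 : List.replicate a (0:Fin 2) = List.replicate d 0 ++ List.replicate (a-d) 0 := by
      rw [← List.replicate_add]; congr 1; omega
    rw [h1]
    simp only [List.append_assoc, List.singleton_append, List.cons_append,
      List.nil_append, List.append_nil]
  · refine ⟨[1] ++ List.replicate a 0 ++ [1] ++ List.replicate d 0,
      List.replicate (b-d) 0, by simp, ?_⟩
    have h1 : List.replicate b (0:Fin 2) = List.replicate d 0 ++ List.replicate (b-d) 0 := by
      rw [← List.replicate_add]; congr 1; omega
    rw [h1]
    simp only [List.append_assoc, List.singleton_append, List.cons_append,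
      List.nil_append, List.append_nil]

/-- For positive `a, b, c, d`, the word `1 0^a 1 0^b 1 0^c 1 0^d` is unbordered
iff `a < d` and (`a ≠ c` or `b < d`). -/
theorem unbordered_iff_word {a b c d : ℕ}
    (ha : 1 ≤ a) (hb : 1 ≤ b) (hc : 1 ≤ c) (hd : 1 ≤ d) :
    ¬ Bordered ([1] ++ List.replicate a 0 ++ [1] ++ List.replicate b 0 ++
        [1] ++ List.replicate c 0 ++ [1] ++ List.replicate d (0 : Fin 2)) ↔
      a < d ∧ (a ≠ c ∨ b < d) := by
  have : Bordered ([1] ++ List.replicate a 0 ++ [1] ++ List.replicate b 0 ++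
        [1] ++ List.replicate c 0 ++ [1] ++ List.replicate d (0 : Fin 2)) ↔
      (d ≤ a ∨ (a = c ∧ d ≤ b)) := ⟨fwd ha hb hc hd, bwd ha hb hc hd⟩
  rw [this]
  omega
end

section
/- The language U' = { 1 0^a 1 0^b 1 0^c 1 0^d : a, b, c, d ≥ 1, a < d, and (a ≠ c or b < d) } over the alphabet {0,1} is not context-free. -/
open ContextFreeGrammar

variable {T : Type}

inductive PT (T : Type) (N : Type) : Type
  | leaf (e : T × Bool) : PT T N
  | node (A : N) (cs : List (PT T N)) : PT T N

namespace PT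
variable {N : Type}

def rootSym : PT T N → Symbol T N
  | leaf e => Symbol.terminal e.1
  | node A _ => Symbol.nonterminal A

def yield : PT T N → List (T × Bool)
  | leaf e => [e]
  | node _ cs => (cs.attach.map (fun c => yield c.1)).flatten
decreasing_by
  have := List.sizeOf_lt_of_mem c.2
  simp only [PT.node.sizeOf_spec]
  omega

@[simp] lemma yield_leaf (e : T × Bool) : yield (leaf (N := N) e) = [e] := by rw [yield]

@[simp] lemma yield_node (A : N) (cs : List (PT T N)) :
    yield (node A cs) = (cs.map yield).flatten := by
  rw [yield]; congr 1; simp [List.attach_map_val]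

end PT

namespace Ogden

/-- map to terminal symbols, forgetting marks -/
def mapT {N : Type} (l : List (T × Bool)) : List (Symbol T N) :=
  l.map (fun e => Symbol.terminal e.1)

@[simp] lemma mapT_append {N : Type} (l l' : List (T × Bool)) :
    mapT (N := N) (l ++ l') = mapT (N := N) l ++ mapT (N := N) l' := by
  simp [mapT]

@[simp] lemma mapT_nil {N : Type} : mapT (N := N) (T := T) [] = [] := rfl

variable (g : ContextFreeGrammar.{0} T)

inductive WF : PT T g.NT → Prop
  | leaf (e : T × Bool) : WF (PT.leaf e)
  | node (A : g.NT) (cs : List (PT T g.NT))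
      (hr : (⟨A, cs.map PT.rootSym⟩ : ContextFreeRule T g.NT) ∈ g.rules)
      (hcs : ∀ c ∈ cs, WF c) : WF (PT.node A cs)

variable {g}

/-- derive the flattened yields from the list of root symbols -/
lemma derives_flatten {cs : List (PT T g.NT)}
    (h : ∀ c ∈ cs, g.Derives [c.rootSym] (mapT c.yield)) :
    g.Derives (cs.map PT.rootSym) (mapT (cs.map PT.yield).flatten) := by
  induction cs with
  | nil => simp only [List.map_nil, List.flatten_nil, mapT_nil]; rfl
  | cons c cs ih =>
    have h1 : g.Derives [c.rootSym] (mapT c.yield) := h c (by simp)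
    have h2 := ih (fun c hc => h c (by simp [hc]))
    have : g.Derives (c.rootSym :: cs.map PT.rootSym)
        (mapT c.yield ++ mapT (cs.map PT.yield).flatten) := by
      have := (h1.append_right (cs.map PT.rootSym)).trans
        (h2.append_left (mapT c.yield))
      simpa using this
    simpa [mapT] using this

lemma WF.derives_yield {t : PT T g.NT} (h : WF g t) :
    g.Derives [t.rootSym] (mapT t.yield) := by
  induction h with
  | leaf e => simp only [PT.rootSym, PT.yield_leaf, mapT, List.map_cons, List.map_nil]; rfl
  | node A cs hr hcs ih =>
    have step : g.Produces [PT.rootSym (PT.node A cs)] (cs.map PT.rootSym) := by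
      refine ⟨⟨A, cs.map PT.rootSym⟩, hr, ?_⟩
      simpa [PT.rootSym] using
        (ContextFreeRule.rewrites_of_exists_parts ⟨A, cs.map PT.rootSym⟩ [] [])
    exact step.trans_derives (by simpa using derives_flatten ih)

/-- From derivation to parse forest. -/
lemma exists_forest {u : List (Symbol T g.NT)} {w : List (T × Bool)}
    (h : g.Derives u (mapT w)) :
    ∃ ts : List (PT T g.NT), (∀ t ∈ ts, WF g t) ∧ ts.map PT.rootSym = u ∧
      (ts.map PT.yield).flatten = w := by
  induction h using Relation.ReflTransGen.head_induction_on with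
  | refl =>
    refine ⟨w.map (fun e => PT.leaf e), ?_, ?_, ?_⟩
    · intro t ht
      obtain ⟨e, _, rfl⟩ := List.mem_map.mp ht
      exact WF.leaf e
    · simp [mapT, PT.rootSym, List.map_map, Function.comp]
    · induction w with
      | nil => simp
      | cons e w ih => simpa using ih
  | head hstep _ ih =>
    obtain ⟨ts, hwf, hroot, hyield⟩ := ih
    obtain ⟨r, hr, hrw⟩ := hstep
    obtain ⟨p, q, hu, hv⟩ := hrw.exists_parts
    subst hv
    -- ts.map rootSym = p ++ r.output ++ q
    rw [hu]
    rw [List.append_assoc] at hroot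
    obtain ⟨ts1, ts23, h1, hr1, h23⟩ := List.map_eq_append_iff.mp hroot
    obtain ⟨ts2, ts3, h2, hr2, hr3⟩ := List.map_eq_append_iff.mp h23
    refine ⟨ts1 ++ [PT.node r.input ts2] ++ ts3, ?_, ?_, ?_⟩
    · intro t ht
      simp only [List.mem_append, List.mem_singleton] at ht
      rcases ht with (ht | rfl) | ht
      · exact hwf t (by simp [h1, h2, ht])
      · refine WF.node _ _ ?_ (fun c hc => hwf c (by simp [h1, h2, hc]))
        rw [hr2]; exact hr
      · exact hwf t (by simp [h1, h2, ht])
    · simp [hr1, hr2, hr3, PT.rootSym]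
    · rw [← hyield, h1, h2]
      simp

/-- count of marked letters -/
def mcnt (l : List (T × Bool)) : ℕ := l.countP (fun e => e.2)

@[simp] lemma mcnt_append (l l' : List (T × Bool)) : mcnt (l ++ l') = mcnt l + mcnt l' :=
  List.countP_append

variable (g)

/-- a number exceeding the length of every rule output, and at least 2 -/
def msize : ℕ := 2 + ∑ r ∈ g.rules, r.output.length

lemma two_le_msize : 2 ≤ msize g := Nat.le_add_right 2 _

lemma rule_len_le_msize {r : ContextFreeRule T g.NT} (hr : r ∈ g.rules) :
    r.output.length ≤ msize g := by
  have : r.output.length ≤ ∑ r ∈ g.rules, r.output.length :=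
    Finset.single_le_sum (f := fun r => r.output.length) (fun _ _ => Nat.zero_le _) hr
  unfold msize
  omega

/-- the list of nonterminals appearing in the grammar -/
noncomputable def nts : List g.NT :=
  g.initial :: g.rules.toList.flatMap (fun r => r.input ::
    r.output.filterMap (fun s => match s with
      | Symbol.nonterminal B => some B
      | Symbol.terminal _ => none))

lemma input_mem_nts {r : ContextFreeRule T g.NT} (hr : r ∈ g.rules) : r.input ∈ nts g := by
  unfold nts
  simp only [List.mem_cons, List.mem_flatMap]
  exact Or.inr ⟨r, Finset.mem_toList.mpr hr, by simp⟩

/-- The spine datastructure: a chain of "branch point frames" inside a parse tree. -/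
inductive Spine : Bool → Symbol T g.NT → List (T × Bool) →
    List (g.NT × List (T × Bool) × List (T × Bool)) → Prop
  | nil (b : Bool) (s : Symbol T g.NT) (w : List (T × Bool))
      (hd : g.Derives [s] (mapT w)) (hm : mcnt w ≤ (msize g) ^ (cond b 1 0)) :
      Spine b s w []
  | cons (b : Bool) (s : Symbol T g.NT) (A : g.NT) (v y w' : List (T × Bool))
      (l : List (g.NT × List (T × Bool) × List (T × Bool)))
      (htop : g.Derives [s] (mapT v ++ [Symbol.nonterminal A] ++ mapT y))
      (hA : A ∈ nts g) (hmark : b = true → 0 < mcnt (v ++ y))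
      (hrest : Spine true (Symbol.nonterminal A) w' l)
      (hm : mcnt (v ++ w' ++ y) ≤ (msize g) ^ (l.length + 1 + cond b 1 0)) :
      Spine b s (v ++ w' ++ y) ((A, v, y) :: l)

variable {g}

lemma Spine.cast_word {b s w w' l} (h : Spine g b s w l) (hw : w = w') : Spine g b s w' l :=
  hw ▸ h

lemma Spine.bound {b s w l} (h : Spine g b s w l) :
    mcnt w ≤ (msize g) ^ (l.length + cond b 1 0) := by
  cases h with
  | nil b s w hd hm => simpa using hm
  | cons b s A v y w' l htop hA hmark hrest hm => simpa [Nat.add_assoc] using hm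

lemma Spine.derives {b s w l} (h : Spine g b s w l) : g.Derives [s] (mapT w) := by
  induction h with
  | nil b s w hd hm => exact hd
  | cons b s A v y w' l htop hA hmark hrest hm ih =>
    refine htop.trans ?_
    have := (ih.append_left (mapT v)).append_right (mapT y)
    simpa using this

lemma Spine.labels_mem {b s w l} (h : Spine g b s w l) : ∀ fr ∈ l, fr.1 ∈ nts g := by
  induction h with
  | nil => simp
  | cons b s A v y w' l htop hA hmark hrest hm ih =>
    intro fr hfr
    rcases List.mem_cons.mp hfr with rfl | hfr
    · exact hA
    · exact ih fr hfr

/-- existence of spines -/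
theorem exists_spine {t : PT T g.NT} (hwf : WF g t) :
    ∃ l, Spine g false t.rootSym t.yield l := by
  induction hwf with
  | leaf e =>
    refine ⟨[], Spine.nil _ _ _ ?_ ?_⟩
    · simp only [PT.rootSym, PT.yield_leaf, mapT, List.map_cons, List.map_nil]; rfl
    · simp [mcnt, List.countP_cons]
      split <;> simp
  | node A cs hr hcs ih =>
    have hwfnode : WF g (PT.node A cs) := WF.node A cs hr hcs
    have hAnts : A ∈ nts g := input_mem_nts g hr
    have hroot : (PT.node A cs).rootSym = Symbol.nonterminal A := rfl
    by_cases h0 : mcnt ((cs.map PT.yield).flatten) = 0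
    · exact ⟨[], Spine.nil _ _ _ hwfnode.derives_yield (by simp [h0])⟩
    have hcs_ne : cs ≠ [] := by
      rintro rfl
      simp [mcnt] at h0
    obtain ⟨c, hcarg⟩ : ∃ c, c ∈ cs.argmax (fun c => mcnt c.yield) := by
      cases h : cs.argmax (fun c => mcnt c.yield) with
      | none => exact absurd (List.argmax_eq_none.mp h) hcs_ne
      | some c => exact ⟨c, by simp [h]⟩
    have hcmem : c ∈ cs := List.argmax_mem (f := fun c => mcnt c.yield) hcarg
    have hcmax : ∀ c' ∈ cs, mcnt c'.yield ≤ mcnt c.yield :=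
      fun c' h' => List.le_of_mem_argmax (f := fun c => mcnt c.yield) h' hcarg
    obtain ⟨csl, csr, hsplit⟩ := List.append_of_mem hcmem
    set pre := (csl.map PT.yield).flatten with hpre
    set post := (csr.map PT.yield).flatten with hpost
    have hWeq : (PT.node A cs).yield = pre ++ (c.yield ++ post) := by
      simp [hsplit, hpre, hpost]
    have hcount : mcnt (PT.node A cs).yield = mcnt pre + mcnt c.yield + mcnt post := by
      rw [hWeq]; simp only [mcnt_append]; omega
    have hlderiv : g.Derives (csl.map PT.rootSym) (mapT pre) :=
      derives_flatten (fun c' h' => (hcs c' (by simp [hsplit, h'])).derives_yield)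
    have hrderiv : g.Derives (csr.map PT.rootSym) (mapT post) :=
      derives_flatten (fun c' h' => (hcs c' (by simp [hsplit, h'])).derives_yield)
    have hprod : g.Produces [Symbol.nonterminal A] (cs.map PT.rootSym) :=
      ⟨⟨A, cs.map PT.rootSym⟩, hr,
        by simpa using (ContextFreeRule.rewrites_of_exists_parts ⟨A, cs.map PT.rootSym⟩ [] [])⟩
    have hctx : g.Derives [Symbol.nonterminal A] (mapT pre ++ [c.rootSym] ++ mapT post) := by
      refine hprod.trans_derives ?_
      rw [hsplit]
      have h1 := hlderiv.append_right ([c.rootSym] ++ csr.map PT.rootSym)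
      have h2 := (hrderiv.append_left (mapT pre ++ [c.rootSym]))
      simp only [List.map_append, List.map_cons, List.append_assoc] at h1 h2 ⊢
      exact h1.trans h2
    have hlen : cs.length ≤ msize g := by
      have := rule_len_le_msize g hr
      simpa using this
    have hsum : mcnt (PT.node A cs).yield ≤ msize g * mcnt c.yield := by
      have h1 : mcnt (PT.node A cs).yield
          = ((cs.map PT.yield).map (List.countP (fun e => e.2))).sum := by
        simp [mcnt, List.countP_flatten]
      have h2 : ((cs.map PT.yield).map (List.countP (fun e => e.2))).sum
          ≤ ((cs.map PT.yield).map (List.countP (fun e => e.2))).length • mcnt c.yield := by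
        refine List.sum_le_card_nsmul _ _ ?_
        intro x hx
        simp only [List.map_map, List.mem_map] at hx
        obtain ⟨c', hc', rfl⟩ := hx
        exact hcmax c' hc'
      simp only [List.length_map, smul_eq_mul] at h2
      calc mcnt (PT.node A cs).yield ≤ cs.length * mcnt c.yield := by rw [h1]; exact h2
        _ ≤ msize g * mcnt c.yield := Nat.mul_le_mul_right _ hlen
    obtain ⟨l', sp'⟩ := ih c hcmem
    revert sp'
    generalize hcy : c.yield = cy
    intro sp'
    by_cases hbr : mcnt (PT.node A cs).yield ≤ mcnt c.yield
    · -- not a branch point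
      cases sp' with
      | nil _ _ _ hd hm =>
        refine ⟨[], Spine.nil _ _ _ hwfnode.derives_yield (le_trans hbr ?_)⟩
        rw [hcy]
        simpa using hm
      | cons _ _ B vv yy w' l'' htop hB hmark hrest hm =>
        have hcb : mcnt c.yield ≤ msize g ^ (l''.length + 1) := by
          rw [hcy]
          simpa using hm
        refine ⟨(B, pre ++ vv, yy ++ post) :: l'', ?_⟩
        refine (Spine.cons false _ B (pre ++ vv) (yy ++ post) w' l'' ?_ hB (by simp)
          hrest ?_).cast_word ?_
        · rw [hroot]
          refine hctx.trans ?_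
          have h2 := (htop.append_left (mapT pre)).append_right (mapT post)
          simp only [mapT_append, List.append_assoc] at h2 ⊢
          exact h2
        · have heq : mcnt ((pre ++ vv) ++ w' ++ (yy ++ post))
              = mcnt (PT.node A cs).yield := by
            rw [hWeq, hcy]
            simp only [mcnt_append]
            omega
          rw [heq]
          refine le_trans hbr ?_
          simpa using hcb
        · rw [hWeq, hcy]
          simp
    · -- branch point
      push_neg at hbr
      have hmarkctx : 0 < mcnt pre + mcnt post := by omega
      cases sp' with
      | nil _ _ _ hd hm =>
        have hcb : mcnt c.yield ≤ msize g ^ 0 := by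
          rw [hcy]
          simpa using hm
        have hbound : mcnt (PT.node A cs).yield ≤ msize g ^ 1 := by
          calc mcnt (PT.node A cs).yield ≤ msize g * mcnt c.yield := hsum
            _ ≤ msize g * msize g ^ 0 := Nat.mul_le_mul_left _ hcb
            _ = msize g ^ 1 := by ring
        refine ⟨[(A, [], [])], ?_⟩
        refine (Spine.cons false _ A [] [] (PT.node A cs).yield [] ?_ hAnts (by simp)
          (Spine.nil true _ _ ?_ (by simpa using hbound)) ?_).cast_word (by simp)
        · rw [hroot]
          simpa [mapT] using ContextFreeGrammar.Derives.refl ([Symbol.nonterminal A] : List (Symbol T g.NT))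
        · rw [← hroot]
          exact hwfnode.derives_yield
        · simpa using hbound
      | cons _ _ B vv yy w' l'' htop hB hmark hrest hm =>
        have hcb : mcnt c.yield ≤ msize g ^ (l''.length + 1) := by
          rw [hcy]
          simpa using hm
        have hbound : mcnt (PT.node A cs).yield ≤ msize g ^ (l''.length + 2) := by
          calc mcnt (PT.node A cs).yield ≤ msize g * mcnt c.yield := hsum
            _ ≤ msize g * msize g ^ (l''.length + 1) := Nat.mul_le_mul_left _ hcb
            _ = msize g ^ (l''.length + 2) := by ring
        refine ⟨(A, [], []) :: (B, pre ++ vv, yy ++ post) :: l'', ?_⟩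
        have hinner : Spine g true (Symbol.nonterminal A) (PT.node A cs).yield
            ((B, pre ++ vv, yy ++ post) :: l'') := by
          refine (Spine.cons true _ B (pre ++ vv) (yy ++ post) w' l'' ?_ hB ?_
            hrest ?_).cast_word ?_
          · refine hctx.trans ?_
            have h2 := (htop.append_left (mapT pre)).append_right (mapT post)
            simp only [mapT_append, List.append_assoc] at h2 ⊢
            exact h2
          · intro _
            simp only [mcnt_append]
            omega
          · have heq : mcnt ((pre ++ vv) ++ w' ++ (yy ++ post))
                = mcnt (PT.node A cs).yield := by
              rw [hWeq, hcy]
              simp only [mcnt_append]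
              omega
            rw [heq]
            simpa using hbound
          · rw [hWeq, hcy]
            simp
        refine (Spine.cons false _ A [] [] (PT.node A cs).yield _ ?_ hAnts (by simp)
          hinner ?_).cast_word (by simp)
        · rw [hroot]
          simpa [mapT] using ContextFreeGrammar.Derives.refl ([Symbol.nonterminal A] : List (Symbol T g.NT))
        · simpa using hbound

lemma Spine.drop {b : Bool} {s : Symbol T g.NT} {w : List (T × Bool)} {A : g.NT}
    {v y : List (T × Bool)} {l1 l2 : List (g.NT × List (T × Bool) × List (T × Bool))}
    (h : Spine g b s w (l1 ++ (A, v, y) :: l2)) :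
    ∃ u z w', w = u ++ v ++ w' ++ y ++ z ∧
      g.Derives [s] (mapT (u ++ v) ++ [Symbol.nonterminal A] ++ mapT (y ++ z)) ∧
      Spine g true (Symbol.nonterminal A) w' l2 ∧
      ((b = true ∨ l1 ≠ []) → 0 < mcnt (v ++ y)) := by
  induction l1 generalizing b s w with
  | nil =>
    cases h with
    | cons _ _ _ _ _ w' _ htop hA hmark hrest hm =>
      refine ⟨[], [], w', by simp, by simpa using htop, hrest, fun hb => hmark ?_⟩
      rcases hb with hb | hb
      · exact hb
      · exact absurd rfl hb
  | cons fr l1 ih =>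
    obtain ⟨B, v0, y0⟩ := fr
    cases h with
    | cons _ _ _ _ _ w0 _ htop hA0 hmark0 hrest hm =>
      obtain ⟨u', z', w', hw, hd, hsp, hmk⟩ := ih hrest
      refine ⟨v0 ++ u', z' ++ y0, w', by simp [hw], ?_, hsp, fun _ => hmk (Or.inl rfl)⟩
      refine htop.trans ?_
      have h2 := (hd.append_left (mapT v0)).append_right (mapT y0)
      simp only [mapT_append, List.append_assoc] at h2 ⊢
      exact h2

lemma exists_dup_of_not_nodup {α β : Type} (f : α → β) :
    ∀ l : List α, ¬ (l.map f).Nodup →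
    ∃ x y l1 l2 l3, l = l1 ++ x :: l2 ++ y :: l3 ∧ f x = f y := by
  intro l
  induction l with
  | nil => simp
  | cons a t ih =>
    intro h
    rw [List.map_cons, List.nodup_cons] at h
    by_cases h1 : f a ∈ t.map f
    · obtain ⟨x, hx, hfx⟩ := List.mem_map.mp h1
      obtain ⟨l2, l3, rfl⟩ := List.append_of_mem hx
      exact ⟨a, x, [], l2, l3, by simp, hfx.symm⟩
    · have h2 : ¬ (t.map f).Nodup := by tauto
      obtain ⟨x, y, l1, l2, l3, rfl, hxy⟩ := ih h2
      exact ⟨x, y, a :: l1, l2, l3, by simp, hxy⟩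

lemma derives_pow {A : g.NT} {v y : List (T × Bool)}
    (h : g.Derives [Symbol.nonterminal A] (mapT v ++ [Symbol.nonterminal A] ++ mapT y)) :
    ∀ n : ℕ, g.Derives [Symbol.nonterminal A]
      (mapT ((List.replicate n v).flatten) ++ [Symbol.nonterminal A] ++
        mapT ((List.replicate n y).flatten)) := by
  intro n
  induction n with
  | zero => simpa [mapT] using ContextFreeGrammar.Derives.refl _
  | succ n ihn =>
    refine h.trans ?_
    have h2 := (ihn.append_left (mapT v)).append_right (mapT y)
    have hv : (List.replicate (n+1) v).flatten = v ++ (List.replicate n v).flatten := by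
      rw [List.replicate_succ, List.flatten_cons]
    have hy : (List.replicate (n+1) y).flatten = (List.replicate n y).flatten ++ y := by
      rw [List.replicate_succ', List.flatten_append]
      simp
    rw [hv, hy]
    simp only [mapT_append, List.append_assoc] at h2 ⊢
    exact h2

theorem ogden (g : ContextFreeGrammar.{0} T) :
    ∃ p : ℕ, 0 < p ∧ ∀ w : List (T × Bool), w.map Prod.fst ∈ g.language →
      p ≤ mcnt w →
      ∃ u v x y z : List (T × Bool), w = u ++ v ++ x ++ y ++ z ∧
        0 < mcnt (v ++ y) ∧ mcnt (v ++ x ++ y) ≤ p ∧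
        ∀ n : ℕ, (u ++ (List.replicate n v).flatten ++ x ++
          (List.replicate n y).flatten ++ z).map Prod.fst ∈ g.language := by
  refine ⟨msize g ^ ((nts g).length + 1) + 1, by positivity, ?_⟩
  set m := msize g with hm
  set K := (nts g).length with hK
  intro w hw hp
  rw [ContextFreeGrammar.mem_language_iff] at hw
  have hw' : g.Derives [Symbol.nonterminal g.initial] (mapT w) := by
    simpa [mapT, List.map_map, Function.comp_def] using hw
  obtain ⟨ts, hwf, hroot, hyield⟩ := exists_forest hw'
  obtain ⟨t, rfl⟩ : ∃ t, ts = [t] := by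
    cases ts with
    | nil => simp at hroot
    | cons t ts' =>
      cases ts' with
      | nil => exact ⟨t, rfl⟩
      | cons t' ts'' => simp at hroot
  have hroott : t.rootSym = Symbol.nonterminal g.initial := by simpa using hroot
  have hyieldt : t.yield = w := by simpa using hyield
  obtain ⟨l, sp⟩ := exists_spine (hwf t (by simp))
  rw [hroott, hyieldt] at sp
  have hbtot := sp.bound
  simp only [cond_false, Nat.add_zero, ← hm] at hbtot
  have h1m : 1 < m := lt_of_lt_of_le one_lt_two (two_le_msize g)
  have hlen : K + 1 < l.length := by
    rw [← Nat.pow_lt_pow_iff_right h1m]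
    omega
  set ld := l.drop (l.length - (K+1)) with hld_def
  have hld_len : ld.length = K + 1 := by
    simp only [hld_def, List.length_drop]
    omega
  have hsub : (ld.map (·.1)) ⊆ nts g := by
    intro a ha
    obtain ⟨fr, hfr, rfl⟩ := List.mem_map.mp ha
    exact sp.labels_mem fr (List.mem_of_mem_drop hfr)
  have hnotnodup : ¬ (ld.map (·.1)).Nodup := by
    intro hnd
    have := (hnd.subperm hsub).length_le
    simp only [List.length_map, hld_len, ← hK] at this
    omega
  obtain ⟨fr1, fr2, s1, s2, s3, hld, hff⟩ := exists_dup_of_not_nodup _ ld hnotnodup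
  obtain ⟨B1, v1, y1⟩ := fr1
  obtain ⟨B2, v2, y2⟩ := fr2
  simp only at hff
  subst hff
  have hlsplit : l = (l.take (l.length - (K+1)) ++ s1) ++ (B1, v1, y1) ::
      (s2 ++ (B1, v2, y2) :: s3) := by
    conv_lhs => rw [← List.take_append_drop (l.length - (K+1)) l, ← hld_def, hld]
    simp [List.append_assoc]
  rw [hlsplit] at sp
  obtain ⟨u0, z0, w1, hweq1, hd1, hsp2, _⟩ := Spine.drop sp
  obtain ⟨u1, z1, w2, hweq2, hd2, hsp3, hmk⟩ := Spine.drop hsp2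
  have hmark : 0 < mcnt (v2 ++ y2) := hmk (Or.inl rfl)
  have hxd : g.Derives [Symbol.nonterminal B1] (mapT w2) := hsp3.derives
  have hs_len : s1.length + s2.length + s3.length + 2 = K + 1 := by
    have := hld_len
    rw [hld] at this
    simp at this
    omega
  have hbnd : mcnt w1 ≤ m ^ (K + 1) := by
    have hb2 := hsp2.bound
    simp only [cond_true, List.length_append, List.length_cons, ← hm] at hb2
    refine le_trans hb2 (Nat.pow_le_pow_right (by omega) ?_)
    omega
  refine ⟨u0 ++ v1, u1 ++ v2, w2, y2 ++ z1, y1 ++ z0, ?_, ?_, ?_, ?_⟩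
  · rw [hweq1, hweq2]
    simp [List.append_assoc]
  · simp only [mcnt_append] at hmark ⊢
    omega
  · have heq : mcnt ((u1 ++ v2) ++ w2 ++ (y2 ++ z1)) = mcnt w1 := by
      rw [hweq2]
      simp only [mcnt_append]
      omega
    simp only [mcnt_append] at heq ⊢
    omega
  · intro n
    rw [ContextFreeGrammar.mem_language_iff]
    have hpump := derives_pow hd2 n
    have hfin : g.Derives [Symbol.nonterminal g.initial]
        (mapT ((u0 ++ v1) ++ (List.replicate n (u1 ++ v2)).flatten ++ w2 ++
          (List.replicate n (y2 ++ z1)).flatten ++ (y1 ++ z0))) := by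
      refine hd1.trans ?_
      have h2 := (hpump.append_left (mapT (u0 ++ v1))).append_right (mapT (y1 ++ z0))
      have h3 := ((hxd.append_left
        (mapT (u0 ++ v1) ++ mapT ((List.replicate n (u1 ++ v2)).flatten))).append_right
        (mapT ((List.replicate n (y2 ++ z1)).flatten) ++ mapT (y1 ++ z0)))
      simp only [mapT_append, List.append_assoc] at h2 h3 ⊢
      exact h2.trans h3
    simpa [mapT, List.map_map, Function.comp_def] using hfin

/-! ### Application to the language U' -/

lemma fin2_cases (a : Fin 2) : a = 0 ∨ a = 1 := by omega

/-- number of zeros having exactly `k` ones before them -/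
def bc : List (Fin 2) → ℕ → ℕ
  | [], _ => 0
  | a :: t, k =>
      if a = 1 then (match k with | 0 => 0 | k+1 => bc t k)
      else ((if k = 0 then 1 else 0) + bc t k)

@[simp] lemma bc_nil (k : ℕ) : bc [] k = 0 := rfl
@[simp] lemma bc_cons_one_zero (t : List (Fin 2)) : bc (1 :: t) 0 = 0 := by simp [bc]
@[simp] lemma bc_cons_one_succ (t : List (Fin 2)) (k : ℕ) : bc (1 :: t) (k+1) = bc t k := by
  simp [bc]
@[simp] lemma bc_cons_zero (t : List (Fin 2)) (k : ℕ) :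
    bc ((0 : Fin 2) :: t) k = (if k = 0 then 1 else 0) + bc t k := by
  have : ((0 : Fin 2) = 1) = False := by simp
  simp [bc, this]

lemma bc_append (α β : List (Fin 2)) (k : ℕ) :
    bc (α ++ β) k = bc α k + if α.count 1 ≤ k then bc β (k - α.count 1) else 0 := by
  induction α generalizing k with
  | nil => simp
  | cons a t ih =>
    rcases fin2_cases a with rfl | rfl
    · have hc : ((0 : Fin 2) :: t).count 1 = t.count 1 := by
        simp [List.count_cons]
      simp only [List.cons_append, bc_cons_zero, hc, ih]
      omega
    · have hc : ((1 : Fin 2) :: t).count 1 = t.count 1 + 1 := by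
        simp [List.count_cons]
      match k with
      | 0 =>
        simp only [List.cons_append, bc_cons_one_zero, hc]
        rw [if_neg (by omega)]
      | k+1 =>
        simp only [List.cons_append, bc_cons_one_succ, hc, ih]
        congr 1
        by_cases h : t.count 1 ≤ k
        · rw [if_pos h, if_pos (by omega)]
          congr 1
          omega
        · rw [if_neg h, if_neg (by omega)]

lemma bc_zeros {α : List (Fin 2)} (h : α.count 1 = 0) (k : ℕ) :
    bc α k = if k = 0 then α.length else 0 := by
  induction α with
  | nil => simp
  | cons a t ih =>
    rcases fin2_cases a with rfl | rfl
    · have ht : t.count 1 = 0 := by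
        simp [List.count_cons] at h
        omega
      simp only [bc_cons_zero, ih ht, List.length_cons]
      split <;> omega
    · exfalso
      rw [List.count_cons] at h
      simp at h

lemma count_one_flatten_rep (l : List (Fin 2)) (n : ℕ) :
    ((List.replicate n l).flatten).count 1 = n * l.count 1 := by
  induction n with
  | zero => simp
  | succ n ih =>
    rw [List.replicate_succ, List.flatten_cons, List.count_append, ih]
    ring

lemma length_flatten_rep {γ : Type} (l : List γ) (n : ℕ) :
    ((List.replicate n l).flatten).length = n * l.length := by
  induction n with
  | zero => simp
  | succ n ih =>
    rw [List.replicate_succ, List.flatten_cons, List.length_append, ih]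
    ring

/-- the word shape of the language U' -/
def form (a b c d : ℕ) : List (Fin 2) :=
  [1] ++ List.replicate a 0 ++ [1] ++ List.replicate b 0 ++
    [1] ++ List.replicate c 0 ++ [1] ++ List.replicate d 0

lemma count_one_form (a b c d : ℕ) : (form a b c d).count 1 = 4 := by
  simp [form, List.count_append, List.count_replicate]

lemma bc_cons_one (t : List (Fin 2)) (k : ℕ) :
    bc (1 :: t) k = if k = 0 then 0 else bc t (k-1) := by
  match k with
  | 0 => simp
  | k+1 => simp

lemma count_one_rep0 (n : ℕ) : (List.replicate n (0 : Fin 2)).count 1 = 0 := by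
  simp [List.count_replicate]

lemma bc_rep0 (n k : ℕ) : bc (List.replicate n (0 : Fin 2)) k = if k = 0 then n else 0 := by
  rw [bc_zeros (count_one_rep0 n), List.length_replicate]

lemma bc_rep0_append (n : ℕ) (rest : List (Fin 2)) (k : ℕ) :
    bc (List.replicate n (0 : Fin 2) ++ rest) k = (if k = 0 then n else 0) + bc rest k := by
  rw [bc_append, count_one_rep0, bc_rep0]
  simp

lemma bc_form (a b c d k : ℕ) :
    bc (form a b c d) k = if k = 1 then a else if k = 2 then b else
      if k = 3 then c else if k = 4 then d else 0 := by
  have e : form a b c d = 1 :: (List.replicate a 0 ++ (1 :: (List.replicate b 0 ++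
      (1 :: (List.replicate c 0 ++ (1 :: List.replicate d 0)))))) := by
    simp [form]
  rw [e]
  match k with
  | 0 => simp [bc_cons_one]
  | 1 => simp [bc_cons_one, bc_rep0_append]
  | 2 => simp [bc_cons_one, bc_rep0_append]
  | 3 => simp [bc_cons_one, bc_rep0_append]
  | 4 => simp [bc_cons_one, bc_rep0_append, bc_rep0]
  | kk+5 => simp [bc_cons_one, bc_rep0_append, bc_rep0]

/-- the pumping identity for block counts -/
lemma bc_pump (u v x y z : List (Fin 2)) (hv : v.count 1 = 0) (hy : y.count 1 = 0)
    (n k : ℕ) :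
    bc (u ++ (List.replicate n v).flatten ++ x ++ (List.replicate n y).flatten ++ z) k =
      bc (u ++ x ++ z) k + (if k = u.count 1 then n * v.length else 0) +
        (if k = u.count 1 + x.count 1 then n * y.length else 0) := by
  have hV : ((List.replicate n v).flatten).count 1 = 0 := by
    rw [count_one_flatten_rep, hv]; ring
  have hY : ((List.replicate n y).flatten).count 1 = 0 := by
    rw [count_one_flatten_rep, hy]; ring
  have hbV := bc_zeros hV
  have hbY := bc_zeros hY
  simp only [bc_append, List.count_append, hV, hY, hbV, hbY,
    length_flatten_rep, Nat.add_zero]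
  split_ifs <;> omega

/-- number of marked letters having exactly `k` ones before them -/
def mb : List (Fin 2 × Bool) → ℕ → ℕ
  | [], _ => 0
  | e :: t, k =>
      if e.1 = 1 then (match k with | 0 => 0 | k+1 => mb t k)
      else ((if k = 0 ∧ e.2 then 1 else 0) + mb t k)

@[simp] lemma mb_nil (k : ℕ) : mb [] k = 0 := rfl

lemma mb_cons_one (b : Bool) (t : List (Fin 2 × Bool)) (k : ℕ) :
    mb ((1, b) :: t) k = if k = 0 then 0 else mb t (k-1) := by
  match k with
  | 0 => simp [mb]
  | k+1 => simp [mb]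

lemma mb_cons_zero (e : Fin 2 × Bool) (he : e.1 = 0) (t : List (Fin 2 × Bool)) (k : ℕ) :
    mb (e :: t) k = (if k = 0 ∧ e.2 then 1 else 0) + mb t k := by
  have : ¬ (e.1 = 1) := by rw [he]; decide
  simp [mb, this]

lemma mb_append (α β : List (Fin 2 × Bool)) (k : ℕ) :
    mb (α ++ β) k = mb α k +
      if (α.map Prod.fst).count 1 ≤ k then mb β (k - (α.map Prod.fst).count 1) else 0 := by
  induction α generalizing k with
  | nil => simp
  | cons e t ih =>
    obtain ⟨f, m⟩ := e
    rcases fin2_cases f with rfl | rfl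
    · have hc : (((0, m) :: t : List (Fin 2 × Bool)).map Prod.fst).count 1
          = (t.map Prod.fst).count 1 := by
        simp [List.count_cons]
      simp only [List.cons_append, mb_cons_zero (0, m) rfl, hc, ih]
      omega
    · have hc : (((1, m) :: t : List (Fin 2 × Bool)).map Prod.fst).count 1
          = (t.map Prod.fst).count 1 + 1 := by
        simp [List.count_cons]
      match k with
      | 0 =>
        rw [List.cons_append, mb_cons_one, mb_cons_one, if_pos rfl, if_pos rfl, hc,
          if_neg (by omega)]
      | k+1 =>
        rw [List.cons_append, mb_cons_one, mb_cons_one, if_neg (Nat.succ_ne_zero k),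
          if_neg (Nat.succ_ne_zero k), Nat.add_sub_cancel, hc, ih]
        congr 1
        by_cases h : (t.map Prod.fst).count 1 ≤ k
        · rw [if_pos h, if_pos (by omega)]
          congr 1
          omega
        · rw [if_neg h, if_neg (by omega)]

lemma mb_zeros {α : List (Fin 2 × Bool)} (h : (α.map Prod.fst).count 1 = 0) :
    mb α 0 = mcnt α := by
  induction α with
  | nil => simp [mcnt]
  | cons e t ih =>
    obtain ⟨f, m⟩ := e
    have hf : f = 0 := by
      rcases fin2_cases f with rfl | rfl
      · rfl
      · exfalso
        rw [List.map_cons, List.count_cons] at h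
        simp at h
    subst hf
    have ht : (t.map Prod.fst).count 1 = 0 := by
      rw [List.map_cons, List.count_cons] at h
      omega
    have hmc : mcnt ((0, m) :: t) = (if m then 1 else 0) + mcnt t := by
      simp [mcnt, List.countP_cons]
      cases m <;> simp [Nat.add_comm]
    rw [mb_cons_zero (0, m) rfl, ih ht, hmc]
    cases m <;> simp

lemma mb_rep0 (n : ℕ) (m : Bool) (k : ℕ) :
    mb (List.replicate n ((0 : Fin 2), m)) k = if k = 0 ∧ m then n else 0 := by
  induction n with
  | zero => simp
  | succ n ih =>
    rw [List.replicate_succ, mb_cons_zero (0, m) rfl, ih]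
    split_ifs <;> simp_all <;> omega

lemma count_one_map_rep0 (n : ℕ) (m : Bool) :
    ((List.replicate n ((0 : Fin 2), m)).map Prod.fst).count 1 = 0 := by
  simp [List.map_replicate, List.count_replicate]

lemma mb_rep0_append (n : ℕ) (m : Bool) (rest : List (Fin 2 × Bool)) (k : ℕ) :
    mb (List.replicate n ((0 : Fin 2), m) ++ rest) k
      = (if k = 0 ∧ m then n else 0) + mb rest k := by
  rw [mb_append, count_one_map_rep0, mb_rep0]
  simp

/-- The arithmetic endgame: the pumped block sizes cannot all satisfy the defining
conditions of `U'`. -/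
lemma endgame (p pf cu cj vl yl e1 e2 e3 e4 : ℕ)
    (hpf : pf = p.factorial) (hp : 1 ≤ p) (hcucj : cu ≤ cj)
    (hor : (1 ≤ vl ∧ cu = 3) ∨ (1 ≤ yl ∧ cj = 3))
    (hb1 : pf + p = e1 + (if 1 = cu then vl else 0) + (if 1 = cj then yl else 0))
    (hb2 : pf + p + 1 = e2 + (if 2 = cu then vl else 0) + (if 2 = cj then yl else 0))
    (hb3 : p = e3 + (if 3 = cu then vl else 0) + (if 3 = cj then yl else 0))
    (hb4 : pf + p + 1 = e4 + (if 4 = cu then vl else 0) + (if 4 = cj then yl else 0))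
    (H : ∀ n : ℕ, ∃ A B C D : ℕ, A < D ∧ (A ≠ C ∨ B < D) ∧
      A = e1 + (if 1 = cu then n * vl else 0) + (if 1 = cj then n * yl else 0) ∧
      B = e2 + (if 2 = cu then n * vl else 0) + (if 2 = cj then n * yl else 0) ∧
      C = e3 + (if 3 = cu then n * vl else 0) + (if 3 = cj then n * yl else 0) ∧
      D = e4 + (if 4 = cu then n * vl else 0) + (if 4 = cj then n * yl else 0)) :
    False := by
  have hpf1 : 1 ≤ pf := hpf ▸ p.factorial_pos
  by_cases hcu3 : cu = 3
  · subst hcu3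
    by_cases hcj3 : cj = 3
    · -- both pumped pieces inside the third block
      subst hcj3
      norm_num at hb1 hb2 hb3 hb4
      have hs1 : 1 ≤ vl + yl := by omega
      have hsp : vl + yl ≤ p := by omega
      have hdvd : (vl + yl) ∣ pf := hpf ▸ Nat.dvd_factorial (by omega) hsp
      set n0 := pf / (vl + yl) + 1 with hn0
      have hprod : n0 * vl + n0 * yl = pf + vl + yl := by
        have h1 : n0 * (vl + yl) = pf + (vl + yl) := by
          rw [hn0, Nat.add_mul, Nat.one_mul, Nat.div_mul_cancel hdvd]
        have h2 : n0 * (vl + yl) = n0 * vl + n0 * yl := Nat.mul_add n0 vl yl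
        omega
      obtain ⟨A, B, C, D, hAD, hdisj, eA, eB, eC, eD⟩ := H n0
      norm_num at eA eB eC eD
      generalize hnv : n0 * vl = nv at eC hprod
      generalize hny : n0 * yl = ny at eC hprod
      rcases hdisj with hd | hd <;> omega
    · by_cases hcj4 : cj = 4
      · -- second pumped piece in the fourth block
        subst hcj4
        norm_num at hb1 hb2 hb3 hb4
        by_cases hyl0 : yl = 0
        · -- effectively only the third block pumps
          subst hyl0
          have hvl1 : 1 ≤ vl := by
            rcases hor with ⟨h, _⟩ | ⟨h, _⟩ <;> omega
          norm_num at hb1 hb2 hb3 hb4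
          have hsp : vl ≤ p := by omega
          have hdvd : vl ∣ pf := hpf ▸ Nat.dvd_factorial (by omega) hsp
          set n1 := pf / vl + 1 with hn1
          have hprod : n1 * vl = pf + vl := by
            rw [hn1, Nat.add_mul, Nat.one_mul, Nat.div_mul_cancel hdvd]
          obtain ⟨A, B, C, D, hAD, hdisj, eA, eB, eC, eD⟩ := H n1
          norm_num at eA eB eC eD
          generalize hnv : n1 * vl = nv at eC hprod
          rcases hdisj with hd | hd <;> omega
        · -- pump down: the fourth block gets too short
          obtain ⟨A, B, C, D, hAD, hdisj, eA, eB, eC, eD⟩ := H 0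
          norm_num at eA eB eC eD
          omega
      · -- second pumped piece is past all blocks (or empty)
        have hvl1 : 1 ≤ vl := by
          rcases hor with ⟨h, _⟩ | ⟨_, h⟩
          · omega
          · omega
        have hcj5 : 5 ≤ cj := by
          rcases hor with ⟨_, _⟩ | ⟨_, h⟩ <;> omega
        rw [if_neg (by omega : ¬(1 = 3)), if_neg (by omega : ¬(1 = cj))] at hb1
        rw [if_neg (by omega : ¬(2 = 3)), if_neg (by omega : ¬(2 = cj))] at hb2
        rw [if_pos rfl, if_neg (by omega : ¬(3 = cj))] at hb3
        rw [if_neg (by omega : ¬(4 = 3)), if_neg (by omega : ¬(4 = cj))] at hb4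
        have hsp : vl ≤ p := by omega
        have hdvd : vl ∣ pf := hpf ▸ Nat.dvd_factorial (by omega) hsp
        set n1 := pf / vl + 1 with hn1
        have hprod : n1 * vl = pf + vl := by
          rw [hn1, Nat.add_mul, Nat.one_mul, Nat.div_mul_cancel hdvd]
        obtain ⟨A, B, C, D, hAD, hdisj, eA, eB, eC, eD⟩ := H n1
        rw [if_neg (by omega : ¬(1 = 3)), if_neg (by omega : ¬(1 = cj))] at eA
        rw [if_neg (by omega : ¬(2 = 3)), if_neg (by omega : ¬(2 = cj))] at eB
        rw [if_pos rfl, if_neg (by omega : ¬(3 = cj))] at eC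
        rw [if_neg (by omega : ¬(4 = 3)), if_neg (by omega : ¬(4 = cj))] at eD
        generalize hnv : n1 * vl = nv at eC hprod
        rcases hdisj with hd | hd <;> omega
  · -- the first pumped piece is not in the third block, so the second one is
    have hyl1 : 1 ≤ yl := by tauto
    have hcj : cj = 3 := by tauto
    subst hcj
    have hcu2 : cu ≤ 2 := by omega
    norm_num at hb1 hb2 hb3 hb4
    rw [if_neg (by omega : ¬(3 = cu))] at hb3
    rw [if_neg (by omega : ¬(4 = cu))] at hb4
    by_cases hcu1 : cu = 1
    · subst hcu1
      norm_num at hb1 hb2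
      by_cases hvl0 : vl = 0
      · -- only the third block pumps
        subst hvl0
        norm_num at hb1 hb2 hb3 hb4
        have hsp : yl ≤ p := by omega
        have hdvd : yl ∣ pf := hpf ▸ Nat.dvd_factorial (by omega) hsp
        set n2 := pf / yl + 1 with hn2
        have hprod : n2 * yl = pf + yl := by
          rw [hn2, Nat.add_mul, Nat.one_mul, Nat.div_mul_cancel hdvd]
        obtain ⟨A, B, C, D, hAD, hdisj, eA, eB, eC, eD⟩ := H n2
        norm_num at eA eB eC eD
        generalize hny : n2 * yl = ny at eC hprod
        rcases hdisj with hd | hd <;> omega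
      · -- the first block pumps up beyond the fourth
        obtain ⟨A, B, C, D, hAD, hdisj, eA, eB, eC, eD⟩ := H 2
        norm_num at eA eB eC eD
        omega
    · -- cu ∈ {0, 2}
      rw [if_neg (by omega : ¬(1 = cu))] at hb1
      have hsp : yl ≤ p := by omega
      have hdvd : yl ∣ pf := hpf ▸ Nat.dvd_factorial (by omega) hsp
      set n2 := pf / yl + 1 with hn2
      have hprod : n2 * yl = pf + yl := by
        rw [hn2, Nat.add_mul, Nat.one_mul, Nat.div_mul_cancel hdvd]
      have hvn : vl ≤ n2 * vl :=
        Nat.le_mul_of_pos_left vl (by rw [hn2]; exact Nat.succ_pos _)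
      obtain ⟨A, B, C, D, hAD, hdisj, eA, eB, eC, eD⟩ := H n2
      norm_num at eA eB eC eD
      rw [if_neg (by omega : ¬(1 = cu))] at eA
      rw [if_neg (by omega : ¬(3 = cu))] at eC
      rw [if_neg (by omega : ¬(4 = cu))] at eD
      generalize hny : n2 * yl = ny at eC hprod
      by_cases hcu2' : (2 : ℕ) = cu
      · rw [if_pos hcu2'] at eB hb2
        generalize hnv : n2 * vl = nv at eB hvn
        rcases hdisj with hd | hd <;> omega
      · rw [if_neg hcu2'] at eB hb2
        rcases hdisj with hd | hd <;> omega

end Ogden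

open Ogden

/-- The language `U' = { 1 0^a 1 0^b 1 0^c 1 0^d : a,b,c,d ≥ 1, a < d, (a ≠ c ∨ b < d) }`
is not context-free. -/
theorem Uprime_not_contextFree :
    ¬ Language.IsContextFree {w : List (Fin 2) | ∃ a b c d : ℕ,
        1 ≤ a ∧ 1 ≤ b ∧ 1 ≤ c ∧ 1 ≤ d ∧ a < d ∧ (a ≠ c ∨ b < d) ∧
        w = [1] ++ List.replicate a 0 ++ [1] ++ List.replicate b 0 ++
          [1] ++ List.replicate c 0 ++ [1] ++ List.replicate d 0} := by
  rintro ⟨g, hg⟩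
  obtain ⟨p, hppos, hog⟩ := Ogden.ogden g
  set pf := p.factorial with hpf
  have hpf1 : 1 ≤ pf := hpf ▸ p.factorial_pos
  -- the marked word: blocks pf+p, pf+p+1, p (marked), pf+p+1
  set W : List (Fin 2 × Bool) :=
    (1, false) :: (List.replicate (pf + p) ((0 : Fin 2), false) ++
    ((1, false) :: (List.replicate (pf + p + 1) ((0 : Fin 2), false) ++
    ((1, false) :: (List.replicate p ((0 : Fin 2), true) ++
    ((1, false) :: List.replicate (pf + p + 1) ((0 : Fin 2), false)))))))  with hWdef
  have hWfst : W.map Prod.fst = form (pf + p) (pf + p + 1) p (pf + p + 1) := by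
    rw [hWdef]
    simp [form]
  have hWmem : W.map Prod.fst ∈ g.language := by
    rw [hg, hWfst]
    exact ⟨pf + p, pf + p + 1, p, pf + p + 1, by omega, by omega, by omega, by omega,
      by omega, Or.inl (by omega), rfl⟩
  have hWmc : mcnt W = p := by
    rw [hWdef]
    simp [mcnt, List.countP_cons, List.countP_append, List.countP_replicate]
  have hmbW : ∀ k, mb W k = if k = 3 then p else 0 := by
    intro k
    rw [hWdef]
    match k with
    | 0 => simp [mb_cons_one, mb_rep0_append, mb_rep0]
    | 1 => simp [mb_cons_one, mb_rep0_append, mb_rep0]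
    | 2 => simp [mb_cons_one, mb_rep0_append, mb_rep0]
    | 3 => simp [mb_cons_one, mb_rep0_append, mb_rep0]
    | 4 => simp [mb_cons_one, mb_rep0_append, mb_rep0]
    | kk+5 => simp [mb_cons_one, mb_rep0_append, mb_rep0]
  obtain ⟨u, v, x, y, z, hw, hmar, hbnd, hpump⟩ := hog W hWmem (le_of_eq hWmc.symm)
  -- membership of the pumped words, projected
  have hmem : ∀ n : ℕ, ∃ A B C D : ℕ, 1 ≤ A ∧ 1 ≤ B ∧ 1 ≤ C ∧ 1 ≤ D ∧ A < D ∧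
      (A ≠ C ∨ B < D) ∧
      (u.map Prod.fst) ++ (List.replicate n (v.map Prod.fst)).flatten ++ (x.map Prod.fst)
        ++ (List.replicate n (y.map Prod.fst)).flatten ++ (z.map Prod.fst)
        = form A B C D := by
    intro n
    have h := hpump n
    rw [hg] at h
    obtain ⟨A, B, C, D, h1, h2, h3, h4, h5, h6, heq⟩ := h
    refine ⟨A, B, C, D, h1, h2, h3, h4, h5, h6, ?_⟩
    have hform : form A B C D = [1] ++ List.replicate A 0 ++ [1] ++ List.replicate B 0 ++
        [1] ++ List.replicate C 0 ++ [1] ++ List.replicate D 0 := rfl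
    rw [hform, ← heq]
    simp [List.map_append, List.map_flatten, List.map_replicate]
  -- the pumped pieces contain no ones
  have hcvy : (v.map Prod.fst).count 1 = 0 ∧ (y.map Prod.fst).count 1 = 0 := by
    obtain ⟨A, B, C, D, _, _, _, _, _, _, heq⟩ := hmem 0
    have h40 : ((u.map Prod.fst) ++ (x.map Prod.fst) ++ (z.map Prod.fst)).count 1 = 4 := by
      have h := congrArg (List.count (1 : Fin 2)) heq
      rw [count_one_form] at h
      simpa using h
    have h4 : (form (pf + p) (pf + p + 1) p (pf + p + 1)).count 1 = 4 := count_one_form _ _ _ _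
    rw [← hWfst, hw] at h4
    simp only [List.map_append, List.count_append] at h4 h40
    constructor <;> omega
  -- locating the marked pumped piece
  have hmv : 0 < mcnt v → (u.map Prod.fst).count 1 = 3 := by
    intro hpos
    by_contra hne
    have hw' : W = u ++ (v ++ (x ++ (y ++ z))) := by
      rw [hw]
      simp
    have h1 : mcnt v ≤ mb W ((u.map Prod.fst).count 1) := by
      rw [hw', mb_append, if_pos le_rfl, Nat.sub_self, mb_append, hcvy.1,
        if_pos (Nat.zero_le 0), Nat.sub_zero, mb_zeros hcvy.1]
      omega
    rw [hmbW, if_neg hne] at h1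
    omega
  have hmy : 0 < mcnt y →
      (u.map Prod.fst).count 1 + (x.map Prod.fst).count 1 = 3 := by
    intro hpos
    by_contra hne
    have hw'' : W = (u ++ v ++ x) ++ (y ++ z) := by
      rw [hw, List.append_assoc (u ++ v ++ x) y z]
    have hcux : (((u ++ v ++ x)).map Prod.fst).count 1
        = (u.map Prod.fst).count 1 + (x.map Prod.fst).count 1 := by
      simp [List.map_append, List.count_append, hcvy.1]
    have h1 : mcnt y ≤ mb W ((u.map Prod.fst).count 1 + (x.map Prod.fst).count 1) := by
      rw [hw'', mb_append, hcux, if_pos le_rfl, Nat.sub_self, mb_append y z 0, hcvy.2,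
        if_pos (Nat.zero_le 0), Nat.sub_zero, mb_zeros hcvy.2]
      omega
    rw [hmbW, if_neg hne] at h1
    omega
  -- base block equations
  have hbase : ∀ k, bc (form (pf + p) (pf + p + 1) p (pf + p + 1)) k
      = bc ((u.map Prod.fst) ++ (x.map Prod.fst) ++ (z.map Prod.fst)) k
        + (if k = (u.map Prod.fst).count 1 then (v.map Prod.fst).length else 0)
        + (if k = (u.map Prod.fst).count 1 + (x.map Prod.fst).count 1
            then (y.map Prod.fst).length else 0) := by
    intro k
    have hw1 : form (pf + p) (pf + p + 1) p (pf + p + 1)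
        = (u.map Prod.fst) ++ (List.replicate 1 (v.map Prod.fst)).flatten ++ (x.map Prod.fst)
          ++ (List.replicate 1 (y.map Prod.fst)).flatten ++ (z.map Prod.fst) := by
      rw [← hWfst, hw]
      simp
    rw [hw1, bc_pump _ _ _ _ _ hcvy.1 hcvy.2, Nat.one_mul, Nat.one_mul]
  -- mark condition in endgame form
  have hor : (1 ≤ (v.map Prod.fst).length ∧ (u.map Prod.fst).count 1 = 3) ∨
      (1 ≤ (y.map Prod.fst).length ∧
        (u.map Prod.fst).count 1 + (x.map Prod.fst).count 1 = 3) := by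
    have hsplit : 0 < mcnt v ∨ 0 < mcnt y := by
      rw [mcnt_append] at hmar
      omega
    have hvle : mcnt v ≤ (v.map Prod.fst).length := by
      rw [List.length_map]
      exact List.countP_le_length
    have hyle : mcnt y ≤ (y.map Prod.fst).length := by
      rw [List.length_map]
      exact List.countP_le_length
    rcases hsplit with h | h
    · exact Or.inl ⟨by omega, hmv h⟩
    · exact Or.inr ⟨by omega, hmy h⟩
  -- assemble and conclude
  refine endgame p pf ((u.map Prod.fst).count 1)
    ((u.map Prod.fst).count 1 + (x.map Prod.fst).count 1)
    ((v.map Prod.fst).length) ((y.map Prod.fst).length)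
    (bc ((u.map Prod.fst) ++ (x.map Prod.fst) ++ (z.map Prod.fst)) 1)
    (bc ((u.map Prod.fst) ++ (x.map Prod.fst) ++ (z.map Prod.fst)) 2)
    (bc ((u.map Prod.fst) ++ (x.map Prod.fst) ++ (z.map Prod.fst)) 3)
    (bc ((u.map Prod.fst) ++ (x.map Prod.fst) ++ (z.map Prod.fst)) 4)
    hpf (by omega) (by omega) hor ?_ ?_ ?_ ?_ ?_
  · have h := hbase 1
    rw [bc_form] at h
    norm_num at h ⊢
    exact h
  · have h := hbase 2
    rw [bc_form] at h
    norm_num at h ⊢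
    exact h
  · have h := hbase 3
    rw [bc_form] at h
    norm_num at h ⊢
    exact h
  · have h := hbase 4
    rw [bc_form] at h
    norm_num at h ⊢
    exact h
  · intro n
    obtain ⟨A, B, C, D, _, _, _, _, h5, h6, heq⟩ := hmem n
    refine ⟨A, B, C, D, h5, h6, ?_, ?_, ?_, ?_⟩
    · have h := congrArg (fun ω => bc ω 1) heq
      rw [bc_pump _ _ _ _ _ hcvy.1 hcvy.2, bc_form] at h
      norm_num at h ⊢
      omega
    · have h := congrArg (fun ω => bc ω 2) heq
      rw [bc_pump _ _ _ _ _ hcvy.1 hcvy.2, bc_form] at h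
      norm_num at h ⊢
      omega
    · have h := congrArg (fun ω => bc ω 3) heq
      rw [bc_pump _ _ _ _ _ hcvy.1 hcvy.2, bc_form] at h
      norm_num at h ⊢
      omega
    · have h := congrArg (fun ω => bc ω 4) heq
      rw [bc_pump _ _ _ _ _ hcvy.1 hcvy.2, bc_form] at h
      norm_num at h ⊢
      omega
end

section
/- Over any alphabet Σ, PRIMEPALSTAR* = PALSTAR, and PRIMEPALSTAR = PALSTAR^{-*}; that is, the prime palstars generate all palstars under Kleene star, and the prime palstars are exactly the inverse star of the (closed) language of palstars. -/
open scoped Computability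

/-- The language of all prime palstars. -/
def PRIMEPALSTAR (α : Type) : Language α := {w | IsPrimePalstar w}

lemma append_mem_kstar {α : Type} {l : Language α} {u v : List α}
    (hu : u ∈ l∗) (hv : v ∈ l∗) : u ++ v ∈ l∗ := by
  obtain ⟨L1, rfl, h1⟩ := Language.mem_kstar.mp hu
  obtain ⟨L2, rfl, h2⟩ := Language.mem_kstar.mp hv
  rw [← List.flatten_append]
  exact Language.join_mem_kstar fun y hy => by
    rcases List.mem_append.mp hy with h | h
    · exact h1 y h
    · exact h2 y h

lemma palstar_mem_prime_kstar {α : Type} :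
    ∀ n (w : List α), w.length ≤ n → w ∈ PALSTAR α → w ∈ (PRIMEPALSTAR α)∗ := by
  intro n
  induction n with
  | zero =>
    intro w hw _
    have : w = [] := List.eq_nil_of_length_eq_zero (Nat.le_zero.mp hw)
    simp [this, Language.nil_mem_kstar]
  | succ n ih =>
    intro w hw hmem
    rcases eq_or_ne w [] with rfl | hne
    · exact Language.nil_mem_kstar _
    by_cases hp : IsPrimePalstar w
    · have : w ∈ PRIMEPALSTAR α := hp
      simpa using append_mem_kstar (l := PRIMEPALSTAR α)
        ⟨[w], by simp, by simpa using this⟩ (Language.nil_mem_kstar _)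
    · have : ∃ u v : List α, u ∈ PALSTAR α ∧ v ∈ PALSTAR α ∧ u ≠ [] ∧ v ≠ [] ∧ w = u ++ v := by
        by_contra h
        exact hp ⟨hmem, hne, h⟩
      obtain ⟨u, v, hu, hv, hune, hvne, rfl⟩ := this
      have hul : u.length ≤ n := by
        have := @List.length_append _ u v ▸ hw
        have hv1 : 1 ≤ v.length := List.length_pos_iff.mpr hvne
        omega
      have hvl : v.length ≤ n := by
        have := @List.length_append _ u v ▸ hw
        have hu1 : 1 ≤ u.length := List.length_pos_iff.mpr hune
        omega
      exact append_mem_kstar (ih u hul hu) (ih v hvl hv)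

lemma prime_kstar_eq {α : Type} : (PRIMEPALSTAR α)∗ = PALSTAR α := by
  apply le_antisymm
  · have h1 : PRIMEPALSTAR α ≤ PALSTAR α := fun w hw => hw.1
    calc (PRIMEPALSTAR α)∗ ≤ (PALSTAR α)∗ := kstar_mono h1
      _ = (PAL α)∗∗ := rfl
      _ = PALSTAR α := kstar_idem _
  · intro w hw
    exact palstar_mem_prime_kstar w.length w le_rfl hw

/-- The prime palstars generate the palstars under Kleene star, and they are
exactly the inverse star of the closed language of palstars. -/
theorem primePalstar_kstar_and_invStar {α : Type} :
    (PRIMEPALSTAR α)∗ = PALSTAR α ∧ PRIMEPALSTAR α = invStar (PALSTAR α) := by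
  refine ⟨prime_kstar_eq, le_antisymm ?_ ?_⟩
  · -- every prime palstar is in every S with S∗ = PALSTAR
    intro w hw
    intro S hSmem
    have hS : (id S : Language α)∗ = PALSTAR α := hSmem
    obtain ⟨hmem, hne, hnot⟩ := hw
    have : w ∈ (id S : Language α)∗ := hS ▸ hmem
    obtain ⟨L, rfl, hL⟩ := Language.mem_kstar_iff_exists_nonempty.mp this
    match L with
    | [] => simp at hne
    | [a] => simpa using (show a ∈ S from (hL a (by simp)).1)
    | a :: b :: rest =>
      exfalso
      apply hnot
      refine ⟨a, (b :: rest).flatten, ?_, ?_, (hL a (by simp)).2, ?_, by simp⟩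
      · have : a ∈ (id S : Language α)∗ :=
          ⟨[a], by simp, by simpa using (hL a (by simp)).1⟩
        exact hS ▸ this
      · have : (b :: rest).flatten ∈ (id S : Language α)∗ :=
          Language.join_mem_kstar fun y hy => (hL y (List.mem_cons_of_mem a hy)).1
        exact hS ▸ this
      · simp only [List.flatten_cons]
        intro h
        exact (hL b (by simp)).2 (List.append_eq_nil_iff.mp h).1
  · -- invStar ⊆ PRIMEPALSTAR since PRIMEPALSTAR∗ = PALSTAR
    intro w hw
    exact hw (PRIMEPALSTAR α) prime_kstar_eq
end

section
/- For every even-length word w over an alphabet Σ, if w is not an even-length palindrome then w is not of the form z ⧢ zᴿ for any word z; and if w = z ⧢ zᴿ for some bordered word z = x u x (x nonempty), then w factors as w = (x ⧢ xᴿ)(u ⧢ uᴿ)(x ⧢ xᴿ), a product of two or three nonempty palstars, so w is not a prime palstar. -/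
open scoped Computability

lemma pshuffle_append_s17 {α : Type} : ∀ (a b c d : List α), a.length = b.length →
    pshuffle (a ++ c) (b ++ d) = pshuffle a b ++ pshuffle c d
  | [], [], c, d, _ => rfl
  | p :: a, q :: b, c, d, h => by
    have h' : a.length = b.length := by simpa using h
    simp only [List.cons_append, pshuffle, List.append_eq, pshuffle_append_s17 a b c d h']

lemma pshuffle_reverse_s17 {α : Type} : ∀ (a b : List α), a.length = b.length →
    (pshuffle a b).reverse = pshuffle b.reverse a.reverse
  | [], [], _ => rfl
  | p :: a, q :: b, h => by
    have h' : a.length = b.length := by simpa using h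
    simp only [pshuffle, List.reverse_cons, List.append_assoc]
    rw [pshuffle_reverse_s17 a b h',
      pshuffle_append_s17 b.reverse a.reverse [q] [p] (by simp [h'])]
    rfl

lemma pshuffle_pal {α : Type} (z : List α) :
    (pshuffle z z.reverse).reverse = pshuffle z z.reverse := by
  rw [pshuffle_reverse_s17 z z.reverse (by simp)]; simp

lemma pshuffle_length {α : Type} : ∀ (a b : List α), a.length = b.length →
    (pshuffle a b).length = 2 * a.length
  | [], [], _ => rfl
  | p :: a, q :: b, h => by
    have h' : a.length = b.length := by simpa using h
    simp [pshuffle, pshuffle_length a b h']; ring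

lemma pshuffle_ne_nil {α : Type} (x : List α) (hx : x ≠ []) :
    pshuffle x x.reverse ≠ [] := by
  cases x with
  | nil => exact absurd rfl hx
  | cons a t =>
    cases h : (a :: t).reverse with
    | nil => simp at h
    | cons b s => simp [pshuffle, h]

lemma pshuffle_mem_palstar {α : Type} (x : List α) :
    pshuffle x x.reverse ∈ PALSTAR α := by
  rcases eq_or_ne x [] with rfl | hx
  · exact Language.nil_mem_kstar _
  · have hmem : pshuffle x x.reverse ∈ PAL α := by
      set w := pshuffle x x.reverse with hw
      have hlen : w.length = 2 * x.length := pshuffle_length _ _ (by simp)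
      refine ⟨w.take x.length, ?_, ?_⟩
      · intro h
        rw [List.take_eq_nil_iff] at h
        rcases h with h | h
        · exact hx (List.length_eq_zero_iff.mp h)
        · exact pshuffle_ne_nil x hx h
      · have hrev : w.reverse = w := pshuffle_pal x
        have h2 : (w.take x.length).reverse = w.drop x.length := by
          rw [List.reverse_take, hrev]
          congr 1
          omega
        rw [h2]
        exact (List.take_append_drop _ _).symm
    have : PAL α ≤ PALSTAR α := le_kstar
    exact this hmem

lemma append_mem_palstar {α : Type} {a b : List α}
    (ha : a ∈ PALSTAR α) (hb : b ∈ PALSTAR α) : a ++ b ∈ PALSTAR α := by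
  have : a ++ b ∈ PALSTAR α * PALSTAR α := Language.append_mem_mul ha hb
  rwa [PALSTAR, kstar_mul_kstar] at this

/-- If an even-length word `w` is not a palindrome then it is not of the form
`z ⧢ zᴿ`; and if `w = z ⧢ zᴿ` for a bordered word `z = x ++ u ++ x` (`x` nonempty),
then `w = (x ⧢ xᴿ)(u ⧢ uᴿ)(x ⧢ xᴿ)`, a product of two or three nonempty palstars,
so `w` is not a prime palstar. -/
theorem shuffle_palindrome_and_bordered {α : Type} (w : List α)
    (heven : Even w.length) :
    (w.reverse ≠ w → ¬ ∃ z : List α, w = pshuffle z z.reverse) ∧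
    (∀ z x u : List α, x ≠ [] → z = x ++ u ++ x → w = pshuffle z z.reverse →
      w = pshuffle x x.reverse ++ pshuffle u u.reverse ++ pshuffle x x.reverse ∧
      pshuffle x x.reverse ∈ PALSTAR α ∧ pshuffle x x.reverse ≠ [] ∧
      pshuffle u u.reverse ∈ PALSTAR α ∧ ¬ IsPrimePalstar w) := by
  constructor
  · rintro hne ⟨z, rfl⟩
    exact hne (pshuffle_pal z)
  · rintro z x u hx rfl rfl
    have key : pshuffle (x ++ u ++ x) (x ++ u ++ x).reverse
        = pshuffle x x.reverse ++ pshuffle u u.reverse ++ pshuffle x x.reverse := by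
      rw [show (x ++ u ++ x).reverse = x.reverse ++ (u.reverse ++ x.reverse) by simp,
        List.append_assoc x u x,
        pshuffle_append_s17 x x.reverse (u ++ x) (u.reverse ++ x.reverse) (by simp),
        pshuffle_append_s17 u u.reverse x x.reverse (by simp)]
      simp [List.append_assoc]
    refine ⟨key, pshuffle_mem_palstar x, pshuffle_ne_nil x hx, pshuffle_mem_palstar u, ?_⟩
    rintro ⟨_, _, hnot⟩
    apply hnot
    refine ⟨pshuffle x x.reverse, pshuffle u u.reverse ++ pshuffle x x.reverse,
      pshuffle_mem_palstar x,
      append_mem_palstar (pshuffle_mem_palstar u) (pshuffle_mem_palstar x),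
      pshuffle_ne_nil x hx,
      fun h => pshuffle_ne_nil x hx (List.append_eq_nil_iff.mp h).2,
      by rw [key, List.append_assoc]⟩
end
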